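/- arXiv:math/0501144 — 8 statements merged into one kernel-verified Lean document; each statement's English description precedes it below -/
import Mathlib

section
/- For complex numbers a, b and a nonnegative integer s, the following identity of linear differential operators of order s+1 holds: the composition (from right to left) of the operators (x(x-1)d/dx - a(x-1) - b - j) for j = 0, 1, ..., s equals (x-1)^{b+s+1} x^{a-b+1} ∘ (d/dx)^{s+1} ∘ (x-1)^{-b} x^{-a+b+s}, where multiplication by a function denotes the corresponding multiplication operator. -/
open Complex

/-- The composition (from right to left) of the operators
`x(x-1) d/dx - a(x-1) - b - j` for `j = 0, 1, ..., n`, acting on functions of a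
real variable with complex values. -/
noncomputable def opComp (a b : ℂ) : ℕ → (ℝ → ℂ) → (ℝ → ℂ)
  | 0, f => fun x => (x : ℂ) * ((x : ℂ) - 1) * deriv f x - (a * ((x : ℂ) - 1) + b) * f x
  | n + 1, f => fun x =>
      (x : ℂ) * ((x : ℂ) - 1) * deriv (opComp a b n f) x
        - (a * ((x : ℂ) - 1) + b + (n + 1)) * opComp a b n f x

namespace Stmt3Aux

/-- The auxiliary function whose iterated derivative appears on the RHS. -/
noncomputable def G (a b : ℂ) (s : ℕ) (f : ℝ → ℂ) : ℝ → ℂ :=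
  fun y : ℝ => ((y : ℂ) - 1) ^ (-b) * (y : ℂ) ^ (-a + b + (s : ℂ)) * f y

lemma mem_sp1 {x : ℝ} (hx : 1 < x) : ((x : ℂ) - 1) ∈ Complex.slitPlane := by
  rw [Complex.mem_slitPlane_iff]
  left
  simp only [Complex.sub_re, Complex.ofReal_re, Complex.one_re]
  linarith

lemma mem_sp2 {x : ℝ} (hx : 1 < x) : (x : ℂ) ∈ Complex.slitPlane := by
  rw [Complex.mem_slitPlane_iff]
  left
  simp only [Complex.ofReal_re]
  linarith

lemma ne1 {x : ℝ} (hx : 1 < x) : ((x : ℂ) - 1) ≠ 0 := by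
  exact Complex.slitPlane_ne_zero (mem_sp1 hx)

lemma ne2 {x : ℝ} (hx : 1 < x) : (x : ℂ) ≠ 0 := by
  exact Complex.slitPlane_ne_zero (mem_sp2 hx)

lemma hasDerivAt_ofReal (x : ℝ) : HasDerivAt (fun y : ℝ => (y : ℂ)) 1 x := by
  simpa using (hasDerivAt_id x).ofReal_comp

lemma hasDerivAt_cpow1 (c : ℂ) {x : ℝ} (hx : 1 < x) :
    HasDerivAt (fun y : ℝ => ((y : ℂ) - 1) ^ c) (c * ((x : ℂ) - 1) ^ (c - 1)) x := by
  have h1 : HasDerivAt (fun z : ℂ => z - 1) 1 ((x : ℝ) : ℂ) := (hasDerivAt_id _).sub_const 1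
  have h : HasDerivAt (fun z : ℂ => (z - 1) ^ c) (c * ((x : ℂ) - 1) ^ (c - 1)) ((x : ℝ) : ℂ) := by
    simpa using h1.cpow_const (c := c) (mem_sp1 hx)
  exact h.comp_ofReal

lemma hasDerivAt_cpow2 (c : ℂ) {x : ℝ} (hx : 1 < x) :
    HasDerivAt (fun y : ℝ => (y : ℂ) ^ c) (c * (x : ℂ) ^ (c - 1)) x := by
  have h : HasDerivAt (fun z : ℂ => z ^ c) (c * (x : ℂ) ^ (c - 1)) ((x : ℝ) : ℂ) :=
    (Complex.hasStrictDerivAt_cpow_const (mem_sp2 hx)).hasDerivAt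
  exact h.comp_ofReal

lemma contDiffAt_cpow1 (c : ℂ) {x : ℝ} (hx : 1 < x) :
    ContDiffAt ℝ (⊤ : ℕ∞) (fun y : ℝ => ((y : ℂ) - 1) ^ c) x := by
  have h : AnalyticAt ℂ (fun z : ℂ => (z - 1) ^ c) (x : ℂ) :=
    (analyticAt_id.sub analyticAt_const).cpow analyticAt_const (mem_sp1 hx)
  have h2 : ContDiffAt ℝ (⊤ : ℕ∞) (fun z : ℂ => (z - 1) ^ c) (x : ℂ) :=
    (h.contDiffAt).restrict_scalars ℝ
  exact h2.comp x (Complex.ofRealCLM.contDiff.contDiffAt)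

lemma contDiffAt_cpow2 (c : ℂ) {x : ℝ} (hx : 1 < x) :
    ContDiffAt ℝ (⊤ : ℕ∞) (fun y : ℝ => (y : ℂ) ^ c) x := by
  have h : AnalyticAt ℂ (fun z : ℂ => z ^ c) (x : ℂ) :=
    analyticAt_id.cpow analyticAt_const (mem_sp2 hx)
  have h2 : ContDiffAt ℝ (⊤ : ℕ∞) (fun z : ℂ => z ^ c) (x : ℂ) :=
    (h.contDiffAt).restrict_scalars ℝ
  exact h2.comp x (Complex.ofRealCLM.contDiff.contDiffAt)

lemma contDiffOn_G (a b : ℂ) (s : ℕ) (f : ℝ → ℂ)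
    (hf : ContDiffOn ℝ (⊤ : ℕ∞) f (Set.Ioi 1)) :
    ContDiffOn ℝ (⊤ : ℕ∞) (G a b s f) (Set.Ioi 1) := by
  intro x hx
  have hx' : (1 : ℝ) < x := hx
  exact (((contDiffAt_cpow1 (-b) hx').mul (contDiffAt_cpow2 (-a + b + s) hx')).mul
    (hf.contDiffAt (isOpen_Ioi.mem_nhds hx'))).contDiffWithinAt

lemma iter_smooth {g : ℝ → ℂ} (hg : ContDiffOn ℝ (⊤ : ℕ∞) g (Set.Ioi 1)) (k : ℕ) :
    ContDiffOn ℝ (⊤ : ℕ∞) (iteratedDeriv k g) (Set.Ioi 1) := by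
  induction k with
  | zero => simpa [iteratedDeriv_zero] using hg
  | succ k ih =>
    rw [iteratedDeriv_succ]
    exact ih.deriv_of_isOpen isOpen_Ioi (by simp)

lemma iter_diff {g : ℝ → ℂ} (hg : ContDiffOn ℝ (⊤ : ℕ∞) g (Set.Ioi 1)) (k : ℕ) {x : ℝ}
    (hx : 1 < x) : DifferentiableAt ℝ (iteratedDeriv k g) x :=
  ((iter_smooth hg k x hx).contDiffAt (isOpen_Ioi.mem_nhds hx)).differentiableAt (by simp)

lemma iter_hasDerivAt {g : ℝ → ℂ} (hg : ContDiffOn ℝ (⊤ : ℕ∞) g (Set.Ioi 1)) (k : ℕ) {x : ℝ}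
    (hx : 1 < x) :
    HasDerivAt (iteratedDeriv k g) (iteratedDeriv (k + 1) g x) x := by
  rw [iteratedDeriv_succ]
  exact (iter_diff hg k hx).hasDerivAt

/-- Leibniz rule for multiplication by `y`. -/
lemma leib {g : ℝ → ℂ} (hg : ContDiffOn ℝ (⊤ : ℕ∞) g (Set.Ioi 1)) (n : ℕ) :
    ∀ x ∈ Set.Ioi (1 : ℝ),
      iteratedDeriv (n + 1) (fun y : ℝ => (y : ℂ) * g y) x =
        (x : ℂ) * iteratedDeriv (n + 1) g x + (n + 1) * iteratedDeriv n g x := by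
  induction n with
  | zero =>
    intro x hx
    have hx' : (1 : ℝ) < x := hx
    have hgd : DifferentiableAt ℝ g x :=
      ((hg x hx).contDiffAt (isOpen_Ioi.mem_nhds hx')).differentiableAt (by simp)
    have h1 : HasDerivAt (fun y : ℝ => (y : ℂ) * g y)
        (1 * g x + (x : ℂ) * deriv g x) x :=
      (hasDerivAt_ofReal x).mul hgd.hasDerivAt
    rw [iteratedDeriv_one, iteratedDeriv_one, iteratedDeriv_zero, h1.deriv]
    push_cast
    ring
  | succ n ih =>
    intro x hx
    have hx' : (1 : ℝ) < x := hx
    rw [iteratedDeriv_succ]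
    have heq : Set.EqOn (iteratedDeriv (n + 1) (fun y : ℝ => (y : ℂ) * g y))
        (fun y : ℝ => (y : ℂ) * iteratedDeriv (n + 1) g y
          + ((n : ℂ) + 1) * iteratedDeriv n g y) (Set.Ioi 1) := fun y hy => ih y hy
    rw [(heq.eventuallyEq_of_mem (isOpen_Ioi.mem_nhds hx')).deriv_eq]
    have d1 : HasDerivAt (fun y : ℝ => (y : ℂ) * iteratedDeriv (n + 1) g y)
        (1 * iteratedDeriv (n + 1) g x + (x : ℂ) * iteratedDeriv (n + 2) g x) x :=
      (hasDerivAt_ofReal x).mul (iter_hasDerivAt hg (n + 1) hx')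
    have d2 : HasDerivAt (fun y : ℝ => ((n : ℂ) + 1) * iteratedDeriv n g y)
        (((n : ℂ) + 1) * iteratedDeriv (n + 1) g x) x :=
      (iter_hasDerivAt hg n hx').const_mul _
    rw [show deriv (fun y : ℝ => (y : ℂ) * iteratedDeriv (n + 1) g y
        + ((n : ℂ) + 1) * iteratedDeriv n g y) x = _ from (d1.add d2).deriv]
    push_cast
    ring

lemma eqOn_iter {g h : ℝ → ℂ} (he : Set.EqOn g h (Set.Ioi 1)) (k : ℕ) :
    Set.EqOn (iteratedDeriv k g) (iteratedDeriv k h) (Set.Ioi 1) := by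
  induction k with
  | zero => simpa [iteratedDeriv_zero] using he
  | succ k ih =>
    intro x hx
    rw [iteratedDeriv_succ, iteratedDeriv_succ]
    exact (ih.eventuallyEq_of_mem (isOpen_Ioi.mem_nhds hx)).deriv_eq

lemma G_succ (a b : ℂ) (s : ℕ) (f : ℝ → ℂ) :
    Set.EqOn (G a b (s + 1) f) (fun y : ℝ => (y : ℂ) * G a b s f y) (Set.Ioi 1) := by
  intro y hy
  have hy' : (1 : ℝ) < y := hy
  have h0 : (y : ℂ) ≠ 0 := ne2 hy'
  have : (y : ℂ) ^ (-a + b + ((s : ℂ) + 1)) = (y : ℂ) ^ (-a + b + (s : ℂ)) * (y : ℂ) := by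
    rw [show -a + b + ((s : ℂ) + 1) = (-a + b + (s : ℂ)) + 1 by ring,
      Complex.cpow_add _ _ h0, Complex.cpow_one]
  simp only [G]
  push_cast
  rw [this]
  ring

/-- The key identity, proved for all `x > 1` simultaneously. -/
lemma key (a b : ℂ) (f : ℝ → ℂ) (hf : ContDiffOn ℝ (⊤ : ℕ∞) f (Set.Ioi 1)) (s : ℕ) :
    ∀ x ∈ Set.Ioi (1 : ℝ), opComp a b s f x =
      ((x : ℂ) - 1) ^ (b + s + 1) * (x : ℂ) ^ (a - b + 1) *
        iteratedDeriv (s + 1) (G a b s f) x := by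
  induction s with
  | zero =>
    intro x hx
    have hx' : (1 : ℝ) < x := hx
    have hz1 : ((x : ℂ) - 1) ≠ 0 := ne1 hx'
    have hz2 : (x : ℂ) ≠ 0 := ne2 hx'
    have hfd : DifferentiableAt ℝ f x :=
      ((hf x hx).contDiffAt (isOpen_Ioi.mem_nhds hx')).differentiableAt (by simp)
    have hu : HasDerivAt (fun y : ℝ => ((y : ℂ) - 1) ^ (-b))
        (-b * ((x : ℂ) - 1) ^ (-b - 1)) x := hasDerivAt_cpow1 (-b) hx'
    have hv : HasDerivAt (fun y : ℝ => (y : ℂ) ^ (-a + b + ((0 : ℕ) : ℂ)))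
        ((-a + b + ((0 : ℕ) : ℂ)) * (x : ℂ) ^ (-a + b + ((0 : ℕ) : ℂ) - 1)) x :=
      hasDerivAt_cpow2 _ hx'
    have hD : HasDerivAt (G a b 0 f)
        ((-b * ((x : ℂ) - 1) ^ (-b - 1) * (x : ℂ) ^ (-a + b + ((0 : ℕ) : ℂ))
            + ((x : ℂ) - 1) ^ (-b) * ((-a + b + ((0 : ℕ) : ℂ)) * (x : ℂ) ^ (-a + b + ((0 : ℕ) : ℂ) - 1)))
            * f x
          + ((x : ℂ) - 1) ^ (-b) * (x : ℂ) ^ (-a + b + ((0 : ℕ) : ℂ)) * deriv f x) x :=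
      (hu.mul hv).mul hfd.hasDerivAt
    have hD' := hD.deriv
    show (x : ℂ) * ((x : ℂ) - 1) * deriv f x - (a * ((x : ℂ) - 1) + b) * f x =
      ((x : ℂ) - 1) ^ (b + ((0 : ℕ) : ℂ) + 1) * (x : ℂ) ^ (a - b + 1) *
        iteratedDeriv 1 (G a b 0 f) x
    rw [iteratedDeriv_one, hD']
    simp only [Nat.cast_zero, add_zero]
    have m1 : ((x : ℂ) - 1) ^ (b + 1) * ((x : ℂ) - 1) ^ (-b) = (x : ℂ) - 1 := by
      rw [← Complex.cpow_add _ _ hz1, show b + 1 + -b = (1 : ℂ) by ring, Complex.cpow_one]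
    have m2 : ((x : ℂ) - 1) ^ (b + 1) * ((x : ℂ) - 1) ^ (-b - 1) = 1 := by
      rw [← Complex.cpow_add _ _ hz1, show b + 1 + (-b - 1) = (0 : ℂ) by ring,
        Complex.cpow_zero]
    have m3 : (x : ℂ) ^ (a - b + 1) * (x : ℂ) ^ (-a + b) = (x : ℂ) := by
      rw [← Complex.cpow_add _ _ hz2, show a - b + 1 + (-a + b) = (1 : ℂ) by ring,
        Complex.cpow_one]
    have m4 : (x : ℂ) ^ (a - b + 1) * (x : ℂ) ^ (-a + b - 1) = 1 := by
      rw [← Complex.cpow_add _ _ hz2, show a - b + 1 + (-a + b - 1) = (0 : ℂ) by ring,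
        Complex.cpow_zero]
    linear_combination
      ((a - b) * f x * ((x : ℂ) ^ (a - b + 1) * (x : ℂ) ^ (-a + b - 1))
          - deriv f x * ((x : ℂ) ^ (a - b + 1) * (x : ℂ) ^ (-a + b))) * m1
        + (b * f x * ((x : ℂ) ^ (a - b + 1) * (x : ℂ) ^ (-a + b))) * m2
        + (b * f x - ((x : ℂ) - 1) * deriv f x) * m3
        + ((a - b) * f x * ((x : ℂ) - 1)) * m4
  | succ s ih =>
    intro x hx
    have hx' : (1 : ℝ) < x := hx
    have hz1 : ((x : ℂ) - 1) ≠ 0 := ne1 hx'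
    have hz2 : (x : ℂ) ≠ 0 := ne2 hx'
    have hG : ContDiffOn ℝ (⊤ : ℕ∞) (G a b s f) (Set.Ioi 1) := contDiffOn_G a b s f hf
    set H : ℝ → ℂ := iteratedDeriv (s + 1) (G a b s f) with hHdef
    -- the RHS of the induction hypothesis, as a function
    have heq : Set.EqOn (opComp a b s f)
        (fun y : ℝ => ((y : ℂ) - 1) ^ (b + s + 1) * (y : ℂ) ^ (a - b + 1) * H y)
        (Set.Ioi 1) := fun y hy => ih y hy
    have hderiv : deriv (opComp a b s f) x =
        deriv (fun y : ℝ => ((y : ℂ) - 1) ^ (b + s + 1) * (y : ℂ) ^ (a - b + 1) * H y) x :=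
      (heq.eventuallyEq_of_mem (isOpen_Ioi.mem_nhds hx')).deriv_eq
    have h1 : HasDerivAt (fun y : ℝ => ((y : ℂ) - 1) ^ (b + s + 1))
        ((b + s + 1) * ((x : ℂ) - 1) ^ (b + (s : ℂ) + 1 - 1)) x := hasDerivAt_cpow1 _ hx'
    have h2 : HasDerivAt (fun y : ℝ => (y : ℂ) ^ (a - b + 1))
        ((a - b + 1) * (x : ℂ) ^ (a - b + 1 - 1)) x := hasDerivAt_cpow2 _ hx'
    have h3 : HasDerivAt H (iteratedDeriv (s + 2) (G a b s f) x) x := by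
      rw [hHdef]
      exact iter_hasDerivAt hG (s + 1) hx'
    have hR : HasDerivAt
        (fun y : ℝ => ((y : ℂ) - 1) ^ (b + s + 1) * (y : ℂ) ^ (a - b + 1) * H y)
        (((b + s + 1) * ((x : ℂ) - 1) ^ (b + (s : ℂ) + 1 - 1) * (x : ℂ) ^ (a - b + 1)
            + ((x : ℂ) - 1) ^ (b + s + 1) * ((a - b + 1) * (x : ℂ) ^ (a - b + 1 - 1))) * H x
          + ((x : ℂ) - 1) ^ (b + s + 1) * (x : ℂ) ^ (a - b + 1) *
              iteratedDeriv (s + 2) (G a b s f) x) x := (h1.mul h2).mul h3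
    -- compute the iterated derivative of G (s+1) via Leibniz
    have hGs : iteratedDeriv (s + 2) (G a b (s + 1) f) x =
        (x : ℂ) * iteratedDeriv (s + 2) (G a b s f) x
          + ((s : ℂ) + 2) * iteratedDeriv (s + 1) (G a b s f) x := by
      have h4 := eqOn_iter (G_succ a b s f) (s + 2) hx
      rw [h4]
      have h5 := leib hG (s + 1) x hx
      rw [h5]
      push_cast
      ring
    show (x : ℂ) * ((x : ℂ) - 1) * deriv (opComp a b s f) x
        - (a * ((x : ℂ) - 1) + b + ((s : ℂ) + 1)) * opComp a b s f x =
      ((x : ℂ) - 1) ^ (b + ((s : ℕ) + 1 : ℕ) + 1) * (x : ℂ) ^ (a - b + 1) *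
        iteratedDeriv ((s + 1) + 1) (G a b (s + 1) f) x
    rw [hderiv, hR.deriv, ih x hx, show (s + 1) + 1 = s + 2 from rfl, hGs]
    -- now pure algebra with cpow exponent shifts
    have e1 : ((x : ℂ) - 1) ^ (b + (s : ℂ) + 1 - 1) = ((x : ℂ) - 1) ^ (b + (s : ℂ)) := by
      rw [show b + (s : ℂ) + 1 - 1 = b + (s : ℂ) by ring]
    have e2 : ((x : ℂ) - 1) ^ (b + (s : ℂ) + 1) = ((x : ℂ) - 1) ^ (b + (s : ℂ)) * ((x : ℂ) - 1) := by
      rw [Complex.cpow_add _ _ hz1, Complex.cpow_one]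
    have e3 : ((x : ℂ) - 1) ^ (b + (((s : ℕ) + 1 : ℕ) : ℂ) + 1)
        = ((x : ℂ) - 1) ^ (b + (s : ℂ)) * ((x : ℂ) - 1) * ((x : ℂ) - 1) := by
      push_cast
      rw [show b + ((s : ℂ) + 1) + 1 = (b + (s : ℂ)) + 1 + 1 by ring,
        Complex.cpow_add _ _ hz1, Complex.cpow_add _ _ hz1, Complex.cpow_one]
    have e4 : (x : ℂ) ^ (a - b + 1 - 1) = (x : ℂ) ^ (a - b) := by
      rw [show a - b + 1 - 1 = a - b by ring]
    have e5 : (x : ℂ) ^ (a - b + 1) = (x : ℂ) ^ (a - b) * (x : ℂ) := by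
      rw [Complex.cpow_add _ _ hz2, Complex.cpow_one]
    rw [e1, e3, e4, e5, e2]
    ring

end Stmt3Aux

theorem stmt3 (a b : ℂ) (s : ℕ) (f : ℝ → ℂ) (hf : ContDiffOn ℝ (⊤ : ℕ∞) f (Set.Ioi 1))
    (x : ℝ) (hx : 1 < x) :
    opComp a b s f x =
      ((x : ℂ) - 1) ^ (b + s + 1) * (x : ℂ) ^ (a - b + 1) *
        iteratedDeriv (s + 1) (fun y : ℝ => ((y : ℂ) - 1) ^ (-b) * (y : ℂ) ^ (-a + b + s) * f y) x := by
  exact Stmt3Aux.key a b f hf s x hx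
end

section
/- Both of the operators in the previous identity annihilate the functions (x-1)^{b+i} x^{a-b-s} for i = 0, 1, ..., s; that is, for each such i, the composition (x(x-1)d/dx - a(x-1) - b - s)···(x(x-1)d/dx - a(x-1) - b) applied to (x-1)^{b+i} x^{a-b-s} is zero. -/
open Complex

/-!
For every complex `k`, the function `(x-1)^(b+k) x^(a-b-k)` is an eigenfunction of each factor
`x(x-1) d/dx - a(x-1) - b - j`, with eigenvalue `k - j`. Expanding `1 = (x - (x-1))^(s-i)` by the
binomial theorem writes `(x-1)^(b+i) x^(a-b-s)` as a combination of these eigenfunctions with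
`k = i, ..., s`, and the composite operator multiplies the one with index `k` by
`∏_{j=0}^{s} (k - j) = 0`.
-/

open Set

noncomputable def eulerFactor (a b j : ℂ) (f : ℝ → ℂ) : ℝ → ℂ :=
  fun x => (x : ℂ) * ((x : ℂ) - 1) * deriv f x - (a * ((x : ℂ) - 1) + b + j) * f x

noncomputable def eigenFun (a b k : ℂ) : ℝ → ℂ :=
  fun x => ((x : ℂ) - 1) ^ (b + k) * (x : ℂ) ^ (a - b - k)

section

variable {a b : ℂ}

lemma opComp_zero (f : ℝ → ℂ) : opComp a b 0 f = eulerFactor a b 0 f := by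
  funext x
  simp [opComp, eulerFactor]

lemma opComp_succ (n : ℕ) (f : ℝ → ℂ) :
    opComp a b (n + 1) f = eulerFactor a b ((n + 1 : ℕ) : ℂ) (opComp a b n f) := by
  funext x
  simp [opComp, eulerFactor]

lemma ofReal_sub_one_ne_zero {x : ℝ} (hx : 1 < x) : (x : ℂ) - 1 ≠ 0 := by
  rw [sub_ne_zero, Ne, ofReal_eq_one]
  exact hx.ne'

lemma hasDerivAt_eigenFun (k : ℂ) {x : ℝ} (hx : 1 < x) :
    HasDerivAt (eigenFun a b k)
      (((b + k) / ((x : ℂ) - 1) + (a - b - k) / x) * eigenFun a b k x) x := by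
  have hx₀ : (x : ℂ) ≠ 0 := ofReal_ne_zero.2 (by linarith)
  have hx₁ := ofReal_sub_one_ne_zero hx
  have hslit₀ : (x : ℂ) ∈ slitPlane := ofReal_mem_slitPlane.2 (by linarith)
  have hslit₁ : (x : ℂ) - 1 ∈ slitPlane := by
    simpa using ofReal_mem_slitPlane.2 (sub_pos.2 hx)
  have h₁ : HasDerivAt (fun z : ℂ => (z - 1) ^ (b + k))
      ((b + k) * ((x : ℂ) - 1) ^ (b + k - 1)) x := by
    simpa using ((hasDerivAt_id (x : ℂ)).sub_const 1).cpow_const hslit₁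
  have h₂ : HasDerivAt (fun z : ℂ => z ^ (a - b - k))
      ((a - b - k) * (x : ℂ) ^ (a - b - k - 1)) x := by
    simpa using (hasDerivAt_id (x : ℂ)).cpow_const hslit₀
  refine ((h₁.mul h₂).comp_ofReal (z := x)).congr_deriv ?_
  simp only [eigenFun, cpow_sub _ _ hx₀, cpow_sub _ _ hx₁, cpow_one]
  field_simp

lemma eulerFactor_congr {U : Set ℝ} (hU : IsOpen U) {f g : ℝ → ℂ} (hfg : EqOn f g U) (j : ℂ) :
    EqOn (eulerFactor a b j f) (eulerFactor a b j g) U := by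
  intro x hx
  simp only [eulerFactor, hfg hx, (hfg.eventuallyEq_of_mem (hU.mem_nhds hx)).deriv_eq]

lemma eulerFactor_sum_eigenFun {ι : Type*} (S : Finset ι) (c k : ι → ℂ) (j : ℂ) {x : ℝ}
    (hx : 1 < x) :
    eulerFactor a b j (fun y => ∑ l ∈ S, c l * eigenFun a b (k l) y) x
      = ∑ l ∈ S, c l * (k l - j) * eigenFun a b (k l) x := by
  have hx₀ : (x : ℂ) ≠ 0 := ofReal_ne_zero.2 (by linarith)
  have hx₁ := ofReal_sub_one_ne_zero hx
  have hderiv := HasDerivAt.fun_sum fun l (_ : l ∈ S) =>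
    (hasDerivAt_eigenFun (a := a) (b := b) (k l) hx).const_mul (c l)
  rw [eulerFactor, hderiv.deriv, Finset.mul_sum, Finset.mul_sum, ← Finset.sum_sub_distrib]
  refine Finset.sum_congr rfl fun l _ => ?_
  have heigen : (x : ℂ) * (x - 1) * ((b + k l) / (x - 1) + (a - b - k l) / x)
      - (a * (x - 1) + b + j) = k l - j := by
    field_simp
    ring
  rw [← heigen]
  ring

lemma opComp_eqOn_sum_eigenFun {ι : Type*} (S : Finset ι) (c k : ι → ℂ) {f : ℝ → ℂ}
    (hf : EqOn f (fun y => ∑ l ∈ S, c l * eigenFun a b (k l) y) (Ioi 1)) (n : ℕ) :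
    EqOn (opComp a b n f)
      (fun y => ∑ l ∈ S, c l * (∏ j ∈ Finset.range (n + 1), (k l - j)) * eigenFun a b (k l) y)
      (Ioi 1) := by
  induction n with
  | zero =>
    intro x hx
    rw [opComp_zero, eulerFactor_congr isOpen_Ioi hf 0 hx, eulerFactor_sum_eigenFun S c k 0 hx]
    simp
  | succ n ih =>
    intro x hx
    rw [opComp_succ, eulerFactor_congr isOpen_Ioi ih _ hx, eulerFactor_sum_eigenFun _ _ k _ hx]
    simp only [Finset.prod_range_succ _ (n + 1), mul_assoc]

lemma eqOn_binomial_sum_eigenFun (p : ℂ) (m : ℕ) :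
    EqOn (fun y : ℝ => ((y : ℂ) - 1) ^ (b + p) * (y : ℂ) ^ (a - b - (p + m)))
      (fun y => ∑ l ∈ Finset.range (m + 1),
        (-1) ^ l * (m.choose l : ℂ) * eigenFun a b (p + l) y) (Ioi 1) := by
  intro x hx
  have hx₀ : (x : ℂ) ≠ 0 := ofReal_ne_zero.2 (by linarith [mem_Ioi.1 hx])
  have hx₁ := ofReal_sub_one_ne_zero hx
  have hsplit : ∀ l ∈ Finset.range (m + 1), eigenFun a b (p + l) x
      = ((x : ℂ) - 1) ^ (b + p) * (x : ℂ) ^ (a - b - (p + m))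
          * (((x : ℂ) - 1) ^ l * (x : ℂ) ^ (m - l)) := by
    intro l hl
    have hlm : l ≤ m := Nat.lt_succ_iff.1 (Finset.mem_range.1 hl)
    have hexp : a - b - (p + l) = a - b - (p + m) + ((m - l : ℕ) : ℂ) := by
      push_cast [hlm]
      ring
    rw [eigenFun, ← add_assoc, hexp, cpow_add _ _ hx₁, cpow_add _ _ hx₀, cpow_natCast, cpow_natCast]
    ring
  dsimp only
  calc ((x : ℂ) - 1) ^ (b + p) * (x : ℂ) ^ (a - b - (p + m))
      = ((x : ℂ) - 1) ^ (b + p) * (x : ℂ) ^ (a - b - (p + m)) * (-((x : ℂ) - 1) + x) ^ m := by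
        rw [show -((x : ℂ) - 1) + x = 1 by ring, one_pow, mul_one]
    _ = _ := by
        rw [add_pow, Finset.mul_sum]
        refine Finset.sum_congr rfl fun l hl => ?_
        rw [hsplit l hl, neg_pow]
        ring

end

theorem stmt4 (a b : ℂ) (s : ℕ) (i : ℕ) (hi : i ≤ s) (x : ℝ) (hx : 1 < x) :
    opComp a b s (fun y : ℝ => ((y : ℂ) - 1) ^ (b + i) * (y : ℂ) ^ (a - b - s)) x = 0 := by
  have hs : (s : ℂ) = i + (s - i : ℕ) := by push_cast [hi]; ring
  rw [hs, opComp_eqOn_sum_eigenFun _ _ _ (eqOn_binomial_sum_eigenFun (i : ℂ) (s - i)) s hx]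
  refine Finset.sum_eq_zero fun l hl => ?_
  have hl : i + l ∈ Finset.range (s + 1) := by
    rw [Finset.mem_range] at hl ⊢
    omega
  rw [Finset.prod_eq_zero hl (by push_cast; ring), mul_zero, zero_mul]
end

section
/- Define y_2((2,1),k;x) = x - m_2(m_1+m_2+1)/((m_2+2)(k+m_1+m_2)) and y_1((2,1),k;x) = (x-1)^2 + (k-1)(2k+2m_1+m_2)/((m_1+k-1)(m_1+m_2+k))·(x-1) + k(k-1)/((m_2+m_1+k)(m_1+k-1)). If (2m_1+m_2)^2 + k(4m_1 - m_2^2) = 0 (and the denominators are nonzero), then y_1((2,1),k;x) = (y_2((2,1),k;x))^2 as polynomials in x. -/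
open Polynomial

theorem stmt6 (m₁ m₂ k : ℂ) (h₁ : m₁ + k - 1 ≠ 0) (h₂ : m₁ + m₂ + k ≠ 0) (h₃ : m₂ + 2 ≠ 0)
    (h : (2 * m₁ + m₂) ^ 2 + k * (4 * m₁ - m₂ ^ 2) = 0) :
    (X - 1) ^ 2 + C ((k - 1) * (2 * k + 2 * m₁ + m₂) / ((m₁ + k - 1) * (m₁ + m₂ + k))) * (X - 1)
        + C (k * (k - 1) / ((m₂ + m₁ + k) * (m₁ + k - 1)))
      = (X - C (m₂ * (m₁ + m₂ + 1) / ((m₂ + 2) * (k + m₁ + m₂)))) ^ 2 := by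
  have h₂' : k + m₁ + m₂ ≠ 0 := by intro hh; apply h₂; linear_combination hh
  have h₂'' : m₂ + m₁ + k ≠ 0 := by intro hh; apply h₂; linear_combination hh
  have e1 : (k - 1) * (2 * k + 2 * m₁ + m₂) / ((m₁ + k - 1) * (m₁ + m₂ + k))
      = 2 - 2 * (m₂ * (m₁ + m₂ + 1) / ((m₂ + 2) * (k + m₁ + m₂))) := by
    field_simp
    linear_combination (-(m₁ + m₂ + k)) * h
  have e2 : k * (k - 1) / ((m₂ + m₁ + k) * (m₁ + k - 1))
      = (1 - m₂ * (m₁ + m₂ + 1) / ((m₂ + 2) * (k + m₁ + m₂))) ^ 2 := by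
    field_simp
    linear_combination (k - 2*k^2 + m₂ - 2*m₂*k - m₂*k^2 - m₂^2*k + m₁ - 3*m₁*k
      - m₁*m₂ - m₁*m₂*k - m₁^2) * h
  rw [e1, e2]
  simp only [map_sub, map_add, map_mul, map_pow, map_ofNat, map_one]
  ring
end

section
/- With m_1 = 2, m_2 = 3, k = 49, the equation (2m_1+m_2)^2 + k(4m_1 - m_2^2) = 0 holds, and consequently y_1((2,1),49;x) = (y_2((2,1),49;x))^2, where y_1, y_2 are the explicit polynomials from the sl_3 two-point Bethe Ansatz with l = (2,1). In particular, the pair (y_1, y_2) of polynomials is not generic: y_1 has a double root which is also a root of y_2. -/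
open Polynomial

/-- `y₁((2,1),k;x)` for parameters `m₁, m₂, k`. -/
noncomputable def y1Poly (m₁ m₂ k : ℂ) : Polynomial ℂ :=
  (X - 1) ^ 2 + C ((k - 1) * (2 * k + 2 * m₁ + m₂) / ((m₁ + k - 1) * (m₁ + m₂ + k))) * (X - 1)
    + C (k * (k - 1) / ((m₁ + m₂ + k) * (m₁ + k - 1)))

/-- `y₂((2,1),k;x)` for parameters `m₁, m₂, k`. -/
noncomputable def y2Poly (m₁ m₂ k : ℂ) : Polynomial ℂ :=
  X - C (m₂ * (m₁ + m₂ + 1) / ((m₂ + 2) * (k + m₁ + m₂)))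

theorem stmt7 :
    ((2 * (2 : ℂ) + 3) ^ 2 + 49 * (4 * 2 - 3 ^ 2) = 0) ∧
    y1Poly 2 3 49 = (y2Poly 2 3 49) ^ 2 ∧
    ∃ z : ℂ, (y2Poly 2 3 49).IsRoot z ∧ 2 ≤ (y1Poly 2 3 49).rootMultiplicity z := by
  have h2 : y1Poly 2 3 49 = (y2Poly 2 3 49) ^ 2 := by
    apply Polynomial.funext
    intro x
    simp [y1Poly, y2Poly]
    ring_nf
  refine ⟨by norm_num, h2, (3 * (2 + 3 + 1) / ((3 + 2) * (49 + 2 + 3)) : ℂ), ?_, ?_⟩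
  · simp [y2Poly]
  · rw [h2, y2Poly, rootMultiplicity_X_sub_C_pow]
end

section
/- Let m_1 = 2, m_2 = 3, k = 49, l_1 = 2, l_2 = 1, and let t_1, t_2, s_1 be complex numbers. Then the system of Bethe Ansatz equations m_1/t_i + k/(t_i - 1) - ∑_{j≠i} 2/(t_i - t_j) + 1/(t_i - s_1) = 0 (i = 1,2) and m_2/s_1 + ∑_j 1/(s_1 - t_j) = 0, with t_1, t_2, s_1 pairwise distinct where required and all different from 0 and 1, has no solutions. -/
set_option maxHeartbeats 4000000


/-- The sl₃ Bethe Ansatz system with `z₁ = 0`, `z₂ = 1`, weights given by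
`m₁ = 2, m₂ = 3, k = 49` and `l = (2,1)` has no solutions. -/
theorem stmt8 :
    ¬ ∃ t₁ t₂ s₁ : ℂ,
      t₁ ≠ t₂ ∧ t₁ ≠ s₁ ∧ t₂ ≠ s₁ ∧
      t₁ ≠ 0 ∧ t₁ ≠ 1 ∧ t₂ ≠ 0 ∧ t₂ ≠ 1 ∧ s₁ ≠ 0 ∧ s₁ ≠ 1 ∧
      2 / t₁ + 49 / (t₁ - 1) - 2 / (t₁ - t₂) + 1 / (t₁ - s₁) = 0 ∧
      2 / t₂ + 49 / (t₂ - 1) - 2 / (t₂ - t₁) + 1 / (t₂ - s₁) = 0 ∧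
      3 / s₁ + 1 / (s₁ - t₁) + 1 / (s₁ - t₂) = 0 := by
  rintro ⟨t₁, t₂, s₁, h12, h1s, h2s, h10, h11, h20, h21, hs0, hs1, e1, e2, e3⟩
  have d12 : t₁ - t₂ ≠ 0 := sub_ne_zero.mpr h12
  have d21 : t₂ - t₁ ≠ 0 := sub_ne_zero.mpr (Ne.symm h12)
  have d1s : t₁ - s₁ ≠ 0 := sub_ne_zero.mpr h1s
  have d2s : t₂ - s₁ ≠ 0 := sub_ne_zero.mpr h2s
  have ds1 : s₁ - t₁ ≠ 0 := sub_ne_zero.mpr (Ne.symm h1s)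
  have ds2 : s₁ - t₂ ≠ 0 := sub_ne_zero.mpr (Ne.symm h2s)
  have d11 : t₁ - 1 ≠ 0 := sub_ne_zero.mpr h11
  have d22 : t₂ - 1 ≠ 0 := sub_ne_zero.mpr h21
  have dss : s₁ - 1 ≠ 0 := sub_ne_zero.mpr hs1
  have E1 : 2*(t₁-1)*(t₁-t₂)*(t₁-s₁) + 49*t₁*(t₁-t₂)*(t₁-s₁)
      - 2*t₁*(t₁-1)*(t₁-s₁) + t₁*(t₁-1)*(t₁-t₂) = 0 := by
    have h := e1
    field_simp at h
    linear_combination h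
  have E2 : 2*(t₂-1)*(t₂-t₁)*(t₂-s₁) + 49*t₂*(t₂-t₁)*(t₂-s₁)
      - 2*t₂*(t₂-1)*(t₂-s₁) + t₂*(t₂-1)*(t₂-t₁) = 0 := by
    have h := e2
    field_simp at h
    linear_combination h
  have E3 : 3*(s₁-t₁)*(s₁-t₂) + s₁*(s₁-t₂) + s₁*(s₁-t₁) = 0 := by
    have h := e3
    field_simp at h
    linear_combination h
  have key : (t₁*t₂*s₁*(t₁-1)*(t₂-1)*(s₁-1)*(t₁-t₂)*(t₁-s₁)*(t₂-s₁))^2 = 0 := by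
    linear_combination ((1/50) * t₁^5 * t₂^6 * s₁^4 + (-12/625) * t₁^4 * t₂^7 * s₁^4 + (1/31250) * t₁^3 * t₂^8 * s₁^4 + (13/390625) * t₁^2 * t₂^9 * s₁^4 + (338/9765625) * t₁ * t₂^10 * s₁^4 + (8788/244140625) * t₂^11 * s₁^4 + (-1/25) * t₁^5 * t₂^5 * s₁^5 + (9/500) * t₁^4 * t₂^6 * s₁^5 + (1219/62500) * t₁^3 * t₂^7 * s₁^5 + (-157/1562500) * t₁^2 * t₂^8 * s₁^5 + (-4083/39062500) * t₁ * t₂^9 * s₁^5 + (-26546/244140625) * t₂^10 * s₁^5 + (1/50) * t₁^5 * t₂^4 * s₁^6 + (27/1250) * t₁^4 * t₂^5 * s₁^6 + (-4887/125000) * t₁^3 * t₂^6 * s₁^6 + (147/1562500) * t₁^2 * t₂^7 * s₁^6 + (4113/39062500) * t₁ * t₂^8 * s₁^6 + (26748/244140625) * t₂^9 * s₁^6 + (-51/2500) * t₁^4 * t₂^4 * s₁^7 + (611/31250) * t₁^3 * t₂^5 * s₁^7 + (-3/250000) * t₁^2 * t₂^6 * s₁^7 + (-6619/156250000) * t₁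 * t₂^7 * s₁^7 + (-14387/390625000) * t₂^8 * s₁^7 + (1/125000) * t₁^3 * t₂^4 * s₁^8 + (-71/3125000) * t₁^2 * t₂^5 * s₁^8 + (6741/312500000) * t₁ * t₂^6 * s₁^8 + (-334/48828125) * t₂^7 * s₁^8 + (49/6250000) * t₁^2 * t₂^4 * s₁^9 + (-87/3906250) * t₁ * t₂^5 * s₁^9 + (330489/15625000000) * t₂^6 * s₁^9 + (2401/312500000) * t₁ * t₂^4 * s₁^10 + (-170569/7812500000) * t₂^5 * s₁^10 + (117649/15625000000) * t₂^4 * s₁^11 + (-2283802113497541/244140625000000000) * t₂^2 * s₁^13 + (8959531368336507/976562500000000000) * t₂ * s₁^14 + (-1/25) * t₁^5 * t₂^6 * s₁^3 + (24/625) * t₁^4 * t₂^7 * s₁^3 + (-1/15625) * t₁^3 * t₂^8 * s₁^3 + (-26/390625) * t₁^2 * t₂^9 * s₁^3 + (-676/9765625) * t₁ * t₂^10 * s₁^3 + (-17576/244140625) * t₂^11 * s₁^3 + (1/25) * t₁^5 * t₂^5 * s₁^4 + (-93/2500) * t₁^4 * t₂^6 * s₁^4 + (-23/12500) * t₁^3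 * t₂^7 * s₁^4 + (13/1562500) * t₁^2 * t₂^8 * s₁^4 + (291/39062500) * t₁ * t₂^9 * s₁^4 + (1586/244140625) * t₂^10 * s₁^4 + (1/25) * t₁^5 * t₂^4 * s₁^5 + (86/15625) * t₁^3 * t₂^6 * s₁^5 + (-29707/781250) * t₁^2 * t₂^7 * s₁^5 + (3894/9765625) * t₁ * t₂^8 * s₁^5 + (204457/488281250) * t₂^9 * s₁^5 + (-1/25) * t₁^5 * t₂^3 * s₁^6 + (-21/500) * t₁^4 * t₂^4 * s₁^6 + (-82/15625) * t₁^3 * t₂^5 * s₁^6 + (476613/6250000) * t₁^2 * t₂^6 * s₁^6 + (-15703/31250000) * t₁ * t₂^7 * s₁^6 + (-1112783/1953125000) * t₂^8 * s₁^6 + (51/1250) * t₁^4 * t₂^3 * s₁^7 + (26/15625) * t₁^3 * t₂^4 * s₁^7 + (-59621/1562500) * t₁^2 * t₂^5 * s₁^7 + (14497/156250000) * t₁ * t₂^6 * s₁^7 + (100327/390625000) * t₂^7 * s₁^7 + (-1/62500) * t₁^3 * t₂^3 * s₁^8 + (-11/6250000) * t₁^2 * t₂^4 * s₁^8 + (1401/15625000)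 * t₁ * t₂^5 * s₁^8 + (-1740013/15625000000) * t₂^6 * s₁^8 + (-49/3125000) * t₁^2 * t₂^3 * s₁^9 + (-243/156250000) * t₁ * t₂^4 * s₁^9 + (85403/976562500) * t₂^5 * s₁^9 + (-2401/156250000) * t₁ * t₂^3 * s₁^10 + (-21217/15625000000) * t₂^4 * s₁^10 + (-117649/7812500000) * t₂^3 * s₁^11 + (171552517507359079/3662109375000000000) * t₂^2 * s₁^12 + (-55425687806204639/1220703125000000000) * t₂ * s₁^13 + (-175677085653657/488281250000000000) * s₁^14 + (1/50) * t₁^5 * t₂^6 * s₁^2 + (-12/625) * t₁^4 * t₂^7 * s₁^2 + (1/31250) * t₁^3 * t₂^8 * s₁^2 + (13/390625) * t₁^2 * t₂^9 * s₁^2 + (338/9765625) * t₁ * t₂^10 * s₁^2 + (8788/244140625) * t₂^11 * s₁^2 + (1/25) * t₁^5 * t₂^5 * s₁^3 + (51/2500) * t₁^4 * t₂^6 * s₁^3 + (-3427/62500) * t₁^3 * t₂^7 * s₁^3 + (89/312500) * t₁^2 * t₂^8 * s₁^3 + (11667/39062500) * t₁ * t₂^9 * s₁^3 + (76466/244140625)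 * t₂^10 * s₁^3 + (-3/25) * t₁^5 * t₂^4 * s₁^4 + (-3/625) * t₁^4 * t₂^5 * s₁^4 + (3191/62500) * t₁^3 * t₂^6 * s₁^4 + (46211/781250) * t₁^2 * t₂^7 * s₁^4 + (-12297/19531250) * t₁ * t₂^8 * s₁^4 + (-160033/244140625) * t₂^9 * s₁^4 + (1/25) * t₁^5 * t₂^3 * s₁^5 + (3/625) * t₁^4 * t₂^4 * s₁^5 + (9/31250) * t₁^3 * t₂^5 * s₁^5 + (-197061/3125000) * t₁^2 * t₂^6 * s₁^5 + (1385103/78125000) * t₁ * t₂^7 * s₁^5 + (-288801/976562500) * t₂^8 * s₁^5 + (1/50) * t₁^5 * t₂^2 * s₁^6 + (12/625) * t₁^4 * t₂^3 * s₁^6 + (8179/125000) * t₁^3 * t₂^4 * s₁^6 + (-164217/3125000) * t₁^2 * t₂^5 * s₁^6 + (-10907333/312500000) * t₁ * t₂^6 * s₁^6 + (251578/244140625) * t₂^7 * s₁^6 + (-51/2500) * t₁^4 * t₂^2 * s₁^7 + (-1937/31250) * t₁^3 * t₂^3 * s₁^7 + (350383/6250000) * t₁^2 * t₂^4 * s₁^7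 + (1368879/78125000) * t₁ * t₂^5 * s₁^7 + (-4704191/15625000000) * t₂^6 * s₁^7 + (1/125000) * t₁^3 * t₂^2 * s₁^8 + (28/390625) * t₁^2 * t₂^3 * s₁^8 + (-5031/39062500) * t₁ * t₂^4 * s₁^8 + (-149949/1953125000) * t₂^5 * s₁^8 + (49/6250000) * t₁^2 * t₂^2 * s₁^9 + (5463/78125000) * t₁ * t₂^3 * s₁^9 + (-987017/7812500000) * t₂^4 * s₁^9 + (2401/312500000) * t₁ * t₂^2 * s₁^10 + (133231/1953125000) * t₂^3 * s₁^10 + (-92966302254659005487/933837890625000000000) * t₂^2 * s₁^11 + (3477222701497443997/36621093750000000000) * t₂ * s₁^12 + (4372305984396217/2441406250000000000) * s₁^13 + (-1/25) * t₁^5 * t₂^5 * s₁^2 + (-3/2500) * t₁^4 * t₂^6 * s₁^2 + (2323/62500) * t₁^3 * t₂^7 * s₁^2 + (-301/1562500) * t₁^2 * t₂^8 * s₁^2 + (-63/312500) * t₁ * t₂^9 * s₁^2 + (-51506/244140625) * t₂^10 * s₁^2 + (1/25) * t₁^5 * t₂^4 * s₁^3 + (-48/625) * t₁^4 * t₂^5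 * s₁^3 + (118/3125) * t₁^3 * t₂^6 * s₁^3 + (-719/156250) * t₁^2 * t₂^7 * s₁^3 + (-3498/9765625) * t₁ * t₂^8 * s₁^3 + (-187223/488281250) * t₂^9 * s₁^3 + (1/25) * t₁^5 * t₂^3 * s₁^4 + (99/625) * t₁^4 * t₂^4 * s₁^4 + (-2007/31250) * t₁^3 * t₂^5 * s₁^4 + (-214197/3125000) * t₁^2 * t₂^6 * s₁^4 + (-552717/15625000) * t₁ * t₂^7 * s₁^4 + (1756719/976562500) * t₂^8 * s₁^4 + (-1/25) * t₁^5 * t₂^2 * s₁^5 + (-51/625) * t₁^4 * t₂^3 * s₁^5 + (-1449/15625) * t₁^3 * t₂^4 * s₁^5 + (24057/156250) * t₁^2 * t₂^5 * s₁^5 + (2889783/78125000) * t₁ * t₂^6 * s₁^5 + (-100899/976562500) * t₂^7 * s₁^5 + (3/2500) * t₁^4 * t₂^2 * s₁^6 + (2579/62500) * t₁^3 * t₂^3 * s₁^6 + (-518613/6250000) * t₁^2 * t₂^4 * s₁^6 + (67176/1953125) * t₁ * t₂^5 * s₁^6 + (-7994889/3125000000) * t₂^6 * s₁^6 + (637/15625)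 * t₁^3 * t₂^2 * s₁^7 + (7493/3125000) * t₁^2 * t₂^3 * s₁^7 + (-5516541/156250000) * t₁ * t₂^4 * s₁^7 + (1200987/976562500) * t₂^5 * s₁^7 + (-59/1250000) * t₁^2 * t₂^2 * s₁^8 + (-954/9765625) * t₁ * t₂^3 * s₁^8 + (2864889/7812500000) * t₂^4 * s₁^8 + (-7203/156250000) * t₁ * t₂^2 * s₁^9 + (-92077/976562500) * t₂^3 * s₁^9 + (4896752990202904420639/42022705078125000000000) * t₂^2 * s₁^10 + (-1521589036108943562929/14007568359375000000000) * t₂ * s₁^11 + (-21153180963309193001/5603027343750000000000) * s₁^12 + (1/50) * t₁^5 * t₂^4 * s₁^2 + (3/50) * t₁^4 * t₂^5 * s₁^2 + (-6903/125000) * t₁^3 * t₂^6 * s₁^2 + (-5193/312500) * t₁^2 * t₂^7 * s₁^2 + (18897/39062500) * t₁ * t₂^8 * s₁^2 + (124668/244140625) * t₂^9 * s₁^2 + (-1/25) * t₁^5 * t₂^3 * s₁^3 + (-153/2500) * t₁^4 * t₂^4 * s₁^3 + (794/15625) * t₁^3 * t₂^5 * s₁^3 + (133077/6250000) * t₁^2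 * t₂^6 * s₁^3 + (3090877/156250000) * t₁ * t₂^7 * s₁^3 + (-483263/1953125000) * t₂^8 * s₁^3 + (1/50) * t₁^5 * t₂^2 * s₁^4 + (-36/625) * t₁^4 * t₂^3 * s₁^4 + (211/125000) * t₁^3 * t₂^4 * s₁^4 + (-47529/3125000) * t₁^2 * t₂^5 * s₁^4 + (10195963/312500000) * t₁ * t₂^6 * s₁^4 + (-850712/244140625) * t₂^7 * s₁^4 + (147/2500) * t₁^4 * t₂^2 * s₁^5 + (4067/62500) * t₁^3 * t₂^3 * s₁^5 + (15903/1250000) * t₁^2 * t₂^4 * s₁^5 + (-1058751/9765625) * t₁ * t₂^5 * s₁^5 + (11463111/3125000000) * t₂^6 * s₁^5 + (-3897/62500) * t₁^3 * t₂^2 * s₁^6 + (7071/390625) * t₁^2 * t₂^3 * s₁^6 + (5862647/156250000) * t₁ * t₂^4 * s₁^6 + (1370529/781250000) * t₂^5 * s₁^6 + (-12681/625000) * t₁^2 * t₂^2 * s₁^7 + (558983/31250000) * t₁ * t₂^3 * s₁^7 + (-559019/244140625) * t₂^4 * s₁^7 + (7203/62500000) * t₁ * t₂^2 * s₁^8 +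 (-45791/1953125000) * t₂^3 * s₁^8 + (-230265974324015201792647/2836532592773437500000000) * t₂^2 * s₁^9 + (20475505962937394861023/280151367187500000000000) * t₂ * s₁^10 + (9916478252689702570009/2269226074218750000000000) * s₁^11 + (-99/2500) * t₁^4 * t₂^4 * s₁^2 + (-37/31250) * t₁^3 * t₂^5 * s₁^2 + (212901/6250000) * t₁^2 * t₂^6 * s₁^2 + (-248779/156250000) * t₁ * t₂^7 * s₁^2 + (-253571/390625000) * t₂^8 * s₁^2 + (99/1250) * t₁^4 * t₂^3 * s₁^3 + (74/15625) * t₁^3 * t₂^4 * s₁^3 + (-47429/1562500) * t₁^2 * t₂^5 * s₁^3 + (-5812703/156250000) * t₁ * t₂^6 * s₁^3 + (149531/78125000) * t₂^7 * s₁^3 + (-99/2500) * t₁^4 * t₂^2 * s₁^4 + (-37/6250) * t₁^3 * t₂^3 * s₁^4 + (-2561/6250000) * t₁^2 * t₂^4 * s₁^4 + (3292359/78125000) * t₁ * t₂^5 * s₁^4 + (30156241/15625000000) * t₂^6 * s₁^4 + (37/15625) * t₁^3 * t₂^2 * s₁^5 + (-138667/3125000) * t₁^2 * t₂^3 * s₁^5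 + (5239779/156250000) * t₁ * t₂^4 * s₁^5 + (-6123897/976562500) * t₂^5 * s₁^5 + (25671/625000) * t₁^2 * t₂^2 * s₁^6 + (-1147801/31250000) * t₁ * t₂^3 * s₁^6 + (535444/244140625) * t₂^4 * s₁^6 + (-2401/15625000) * t₁ * t₂^2 * s₁^7 + (161113/156250000) * t₂^3 * s₁^7 + (475943576561329456063519/14182662963867187500000000) * t₂^2 * s₁^8 + (-403732615572917649282677/14182662963867187500000000) * t₂ * s₁^9 + (-10196343919140181939241/3403839111328125000000000) * s₁^10 + (2401/125000) * t₁^3 * t₂^4 * s₁^2 + (-55223/3125000) * t₁^2 * t₂^5 * s₁^2 + (741909/312500000) * t₁ * t₂^6 * s₁^2 + (19208/48828125) * t₂^7 * s₁^2 + (-2401/62500) * t₁^3 * t₂^3 * s₁^3 + (88837/6250000) * t₁^2 * t₂^4 * s₁^3 + (1202901/78125000) * t₁ * t₂^5 * s₁^3 + (-40713757/15625000000) * t₂^6 * s₁^3 + (2401/125000) * t₁^3 * t₂^2 * s₁^4 + (9604/390625) * t₁^2 * t₂^3 * s₁^4 + (-295323/7812500) * t₁ * t₂^4 * s₁^4 +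 (4559499/1953125000) * t₂^5 * s₁^4 + (-26411/1250000) * t₁^2 * t₂^2 * s₁^5 + (194481/9765625) * t₁ * t₂^3 * s₁^5 + (13159881/7812500000) * t₂^4 * s₁^5 + (7203/62500000) * t₁ * t₂^2 * s₁^6 + (-3743159/1953125000) * t₂^3 * s₁^6 + (-530249030067623124526177/70913314819335937500000000) * t₂^2 * s₁^7 + (789077839267857733815067/141826629638671875000000000) * t₂ * s₁^8 + (102728597199433834963789/85095977783203125000000000) * s₁^9 + (2401/6250000) * t₁^2 * t₂^4 * s₁^2 + (-21609/19531250) * t₁ * t₂^5 * s₁^2 + (-669879/15625000000) * t₂^6 * s₁^2 + (-2401/3125000) * t₁^2 * t₂^3 * s₁^3 + (338541/156250000) * t₁ * t₂^4 * s₁^3 + (977207/976562500) * t₂^5 * s₁^3 + (2401/6250000) * t₁^2 * t₂^2 * s₁^4 + (-79233/78125000) * t₁ * t₂^3 * s₁^4 + (-14965433/7812500000) * t₂^4 * s₁^4 + (-7203/156250000) * t₁ * t₂^2 * s₁^5 + (977207/976562500) * t₂^3 * s₁^5 + (70729515203007747415427/118188858032226562500000000) * t₂^2 * s₁^6 + (-77195793386937899765693/354566574096679687500000000)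 * t₂ * s₁^7 + (-109150373644668041465899/425479888916015625000000000) * s₁^8 + (2401/312500000) * t₁ * t₂^4 * s₁^2 + (-290521/7812500000) * t₂^5 * s₁^2 + (-2401/156250000) * t₁ * t₂^3 * s₁^3 + (1265327/15625000000) * t₂^4 * s₁^3 + (2401/312500000) * t₁ * t₂^2 * s₁^4 + (-98441/1953125000) * t₂^3 * s₁^4 + (14389243402038560565181/393962860107421875000000000) * t₂^2 * s₁^5 + (-288645786019251226506451/4727554321289062500000000000) * t₂ * s₁^6 + (12494950890948211629881/709133148193359375000000000) * s₁^7 + (2401/15625000000) * t₂^4 * s₁^2 + (-2401/7812500000) * t₂^3 * s₁^3 + (-266908562041129446557/218868255615234375000000000) * t₂^2 * s₁^4 + (-1182907814455216214281/1969814300537109375000000000) * t₂ * s₁^5 + (3417340099185808467259/2363777160644531250000000000) * s₁^6 + (-1295816487132119407/72956085205078125000000000) * t₂^2 * s₁^3 + (18104269001112903329/437736511230468750000000000) * t₂ * s₁^4 + (5488000892623446617/262641906738281250000000000) * s₁^5 + (58748284545587/476837158203125000000000) * t₂^2 * s₁^2 + (-92506059875053279/72956085205078125000000000) * t₂ * s₁^3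 + (193711599381284131/87547302246093750000000000) * s₁^4 + (4519098811199/1907348632812500000000000) * t₂ * s₁^2 + (-4519098811199/572204589843750000000000) * s₁^3) * E1 + ((-8788/244140625) * t₁ * t₂^10 * s₁^4 + (35867/488281250) * t₁ * t₂^9 * s₁^5 + (35152/732421875) * t₂^10 * s₁^5 + (-1907959/50781250000) * t₁ * t₂^8 * s₁^6 + (-279578/3662109375) * t₂^9 * s₁^6 + (5299/528125000000) * t₁ * t₂^7 * s₁^7 + (13558783/317382812500) * t₂^8 * s₁^7 + (249293/27462500000000) * t₁ * t₂^6 * s₁^8 + (413245043/41259765625000) * t₂^7 * s₁^8 + (46123604411/7140250000000000) * t₁ * t₂^5 * s₁^9 + (182696078381/10727539062500000) * t₂^6 * s₁^9 + (-5051980053199/371293000000000000) * t₁ * t₂^4 * s₁^10 + (82719254391277/2789160156250000000) * t₂^5 * s₁^10 + (139675632918979/19307236000000000000) * t₁ * t₂^3 * s₁^11 + (106088509729067677/2175544921875000000000) * t₂^4 * s₁^11 + (6744401/64254481408000000) * t₁ * t₂^2 * s₁^12 + (47447901061370178859/565641679687500000000000) * t₂^3 * s₁^12 + (-175677085653657/19531250000000000)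 * t₁^2 * s₁^13 + (71961265713358366730129607/101966340125000000000000000000) * t₁ * t₂ * s₁^13 + (6990661265067182263351/49022278906250000000000000) * t₂^2 * s₁^13 + (224061190748235256860050211/25491585031250000000000000000) * t₁ * s₁^14 + (-1780733855437982353598571/2549158503125000000000000000) * t₂ * s₁^14 + (128271235494597677194137/4078653605000000000000000000) * s₁^15 + (17576/244140625) * t₁ * t₂^10 * s₁^3 + (30901/488281250) * t₁ * t₂^9 * s₁^4 + (-70304/732421875) * t₂^10 * s₁^4 + (-1126937/3173828125) * t₁ * t₂^8 * s₁^5 + (-2362334/18310546875) * t₂^9 * s₁^5 + (116635171/528125000000) * t₁ * t₂^7 * s₁^6 + (2586314791/7141113281250) * t₂^8 * s₁^6 + (-1408871/13731250000000) * t₁ * t₂^6 * s₁^7 + (-1009709908109/3713378906250000) * t₂^7 * s₁^7 + (-270794873327/7140250000000000) * t₁ * t₂^5 * s₁^8 + (-91106578480829/965478515625000000) * t₂^6 * s₁^8 + (6291734800187/92823250000000000) * t₁ * t₂^4 * s₁^9 + (-8292683338778857/50204882812500000000) * t₂^5 * s₁^9 + (-319886033971553/19307236000000000000) * t₁ * t₂^3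 * s₁^10 + (-17795142670649849309/65266347656250000000000) * t₂^4 * s₁^10 + (-21911324008357/1544578880000000000) * t₁ * t₂^2 * s₁^11 + (-7919979720558359460041/16969250390625000000000000) * t₂^3 * s₁^11 + (13196347500566083/292968750000000000) * t₁^2 * s₁^12 + (-1801840052296837902614427211/509831700625000000000000000000) * t₁ * t₂ * s₁^12 + (-270638888467032373570261/339385007812500000000000000) * t₂^2 * s₁^12 + (-5624485557461637743564140103/127457925156250000000000000000) * t₁ * s₁^13 + (256485541781640418594029893/76474755093750000000000000000) * t₂ * s₁^13 + (35256153692171638686013141/305899020375000000000000000000) * s₁^14 + (-8788/244140625) * t₁ * t₂^10 * s₁^2 + (-169403/488281250) * t₁ * t₂^9 * s₁^3 + (35152/732421875) * t₂^10 * s₁^3 + (8043063/25390625000) * t₁ * t₂^8 * s₁^4 + (8918338/18310546875) * t₂^9 * s₁^4 + (789950977/1320312500000) * t₁ * t₂^7 * s₁^5 + (-3022726853/17852783203125) * t₂^8 * s₁^5 + (-73672146497/137312500000000) * t₁ * t₂^6 * s₁^6 + (-2645530400393/4641723632812500) * t₂^7 * s₁^6 + (26289583459/285610000000000) * t₁ *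 t₂^5 * s₁^7 + (10895679006945451/14482177734375000000) * t₂^6 * s₁^7 + (-2276003555143/18564650000000000) * t₁ * t₂^4 * s₁^8 + (24967500599407343/62756103515625000000) * t₂^5 * s₁^8 + (-106696074485569/2413404500000000000) * t₁ * t₂^3 * s₁^9 + (129681689698046570131/195799042968750000000000) * t₂^4 * s₁^9 + (14504856814750689/200795254400000000000) * t₁ * t₂^2 * s₁^10 + (71557999450784111586727/63634688964843750000000000) * t₂^3 * s₁^10 + (-7151794893898048499/74707031250000000000) * t₁^2 * s₁^11 + (57492969900002962604237460199/7647475509375000000000000000000) * t₁ * t₂ * s₁^11 + (42635405689291359588084721/22060025507812500000000000000) * t₂^2 * s₁^11 + (179878620884892931534226312707/1911868877343750000000000000000) * t₁ * s₁^12 + (-5774871296175749066513312399/860340994804687500000000000000) * t₂ * s₁^12 + (-4588597310081315205823776073/4588485305625000000000000000000) * s₁^13 + (20527/97656250) * t₁ * t₂^9 * s₁^2 + (369407/634765625) * t₁ * t₂^8 * s₁^3 + (-5158114/18310546875) * t₂^9 * s₁^3 + (-1612314671/1320312500000) * t₁ * t₂^7 * s₁^4 + (-32805266803/35705566406250) *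 t₂^8 * s₁^4 + (-8433550653/34328125000000) * t₁ * t₂^6 * s₁^5 + (48487143956389/46417236328125000) * t₂^7 * s₁^5 + (4063155967913/7140250000000000) * t₁ * t₂^5 * s₁^6 + (3178458257314231/36205444335937500000) * t₂^6 * s₁^6 + (6863643093397/92823250000000000) * t₁ * t₂^4 * s₁^7 + (-507761942186399561/418374023437500000000) * t₂^5 * s₁^7 + (125991730666877/603351125000000000) * t₁ * t₂^3 * s₁^8 + (-2684429845903569257321/2936985644531250000000000) * t₂^4 * s₁^8 + (-17117544508478731/125497034000000000000) * t₁ * t₂^2 * s₁^9 + (-292856075904478789367441/190904066894531250000000000) * t₂^3 * s₁^9 + (376818846280782311203/3361816406250000000000) * t₁^2 * s₁^10 + (-3040447112583654160775849123603/344136397921875000000000000000000) * t₁ * t₂ * s₁^10 + (-109673924095611077811480109/41362547827148437500000000000) * t₂^2 * s₁^10 + (-161777001235418658553910845782463/1462579691167968750000000000000000) * t₁ * s₁^11 + (370179910076837576956848137999/51620459688281250000000000000000) * t₂ * s₁^11 + (8274944445941757231001579551293/3510191258803125000000000000000000) * s₁^12 + (-5139947/10156250000) * t₁ * t₂^8 *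 s₁^2 + (-623283073/2640625000000) * t₁ * t₂^7 * s₁^3 + (16262522311/23803710937500) * t₂^8 * s₁^3 + (17590343611/10562500000000) * t₁ * t₂^6 * s₁^4 + (30552616137587/46417236328125000) * t₂^7 * s₁^4 + (-2914880855047/7140250000000000) * t₁ * t₂^5 * s₁^5 + (-2669297183589287/1740646362304687500) * t₂^6 * s₁^5 + (-14991285640977/37129300000000000) * t₁ * t₂^4 * s₁^6 + (856453380928070987/1045935058593750000000) * t₂^5 * s₁^6 + (-228834089248793/742586000000000000) * t₁ * t₂^3 * s₁^7 + (18030489020659723629029/14684928222656250000000000) * t₂^4 * s₁^7 + (9622624279053037/100397627200000000000) * t₁ * t₂^2 * s₁^8 + (23829398408242817497009/18356160278320312500000000) * t₂^3 * s₁^8 + (-17737209669264315402319/226922607421875000000000) * t₁^2 * s₁^9 + (144835307387551900289430166870019/23229206859726562500000000000000000) * t₁ * t₂ * s₁^9 + (334939588016339134548475189/148905172177734375000000000000) * t₂^2 * s₁^9 + (7655532383105624075188321255218959/98724129153837890625000000000000000) * t₁ * s₁^10 + (-7452508523318406600147466753151/1742190514479492187500000000000000) * t₂ * s₁^10 + (-221578888290591529038883204588639/78979303323070312500000000000000000)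 * s₁^11 + (1684808111/2640625000000) * t₁ * t₂^7 * s₁^2 + (-30697387651/68656250000000) * t₁ * t₂^6 * s₁^3 + (-26951988608039/30944824218750000) * t₂^7 * s₁^3 + (-6860926199813/7140250000000000) * t₁ * t₂^5 * s₁^4 + (6592762082063693/40228271484375000000) * t₂^6 * s₁^4 + (51247351067941/92823250000000000) * t₁ * t₂^4 * s₁^5 + (133111567604465126933/156890258789062500000000) * t₂^5 * s₁^5 + (3084900058491307/9653618000000000000) * t₁ * t₂^3 * s₁^6 + (-372793527317440187660311/367123205566406250000000000) * t₂^4 * s₁^6 + (7885790296146917/250994068000000000000) * t₁ * t₂^2 * s₁^7 + (-38784365991044866897073971/47726016723632812500000000000) * t₂^3 * s₁^7 + (36772820270596181115463/1134613037109375000000000) * t₁^2 * s₁^8 + (-311426186615027961248424275835863/116146034298632812500000000000000000) * t₁ * t₂ * s₁^8 + (-44777439869953997564750817131/37226293044433593750000000000000) * t₂^2 * s₁^8 + (-47949946127915197778131677475965209/1480861937307568359375000000000000000) * t₁ * s₁^9 + (22147146335283095796051171150109/17421905144794921875000000000000000) * t₂ * s₁^9 + (1344922599875003965682155150698767/710813729907632812500000000000000000)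 * s₁^10 + (-59860500287/137312500000000) * t₁ * t₂^6 * s₁^2 + (169183086793/285610000000000) * t₁ * t₂^5 * s₁^3 + (24411263554019111/40228271484375000000) * t₂^6 * s₁^3 + (8867334431053/92823250000000000) * t₁ * t₂^4 * s₁^4 + (-2473777957938012313/4902820587158203125000) * t₂^5 * s₁^4 + (-159020561003647/603351125000000000) * t₁ * t₂^3 * s₁^5 + (2233074061926367494023/203957336425781250000000000) * t₂^4 * s₁^5 + (-42917254158253279/501988136000000000000) * t₁ * t₂^2 * s₁^6 + (52891990370032922432745127/119315041809082031250000000000) * t₂^3 * s₁^6 + (-41387712226740615949129/5673065185546875000000000) * t₁^2 * s₁^7 + (30319901294864678017208442258833/44671551653320312500000000000000000) * t₁ * t₂ * s₁^7 + (71902426750913665365463771991/186131465222167968750000000000000) * t₂^2 * s₁^7 + (4188659272526278284279132181533359/569562283579833984375000000000000000) * t₁ * s₁^8 + (-45358896428850618041527012613/837591593499755859375000000000000) * t₂ * s₁^8 + (-974021573433042276975941461598413/1366949480591601562500000000000000000) * s₁^9 + (1050505599563/7140250000000000) * t₁ * t₂^5 * s₁^2 + (-4308031592753/18564650000000000) *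 t₁ * t₂^4 * s₁^3 + (-11055008631367768739/52296752929687500000000) * t₂^5 * s₁^3 + (38782175518387/482680900000000000) * t₁ * t₂^3 * s₁^4 + (46448062429287000857389/203957336425781250000000000) * t₂^4 * s₁^4 + (5090275229425589/125497034000000000000) * t₁ * t₂^2 * s₁^5 + (-23991027760543929382064159/198858403015136718750000000000) * t₂^3 * s₁^5 + (5830502936993309296379/9455108642578125000000000) * t₁^2 * s₁^6 + (-89545755795324824762065172074579/967883619155273437500000000000000000) * t₁ * t₂ * s₁^6 + (-2285837234262386338705120033/38777388587951660156250000000000) * t₂^2 * s₁^6 + (-23044960348816386920145268158382391/37021548432689208984375000000000000000) * t₁ * s₁^7 + (-9441532493877233848876125149053/145182542873291015625000000000000000) * t₂ * s₁^7 + (10980184390067697534803539721158309/88851716238454101562500000000000000000) * s₁^8 + (-6434714149423/371293000000000000) * t₁ * t₂^4 * s₁^2 + (24554339072683/1485172000000000000) * t₁ * t₂^3 * s₁^3 + (1666862995647611840911/67985778808593750000000000) * t₂^4 * s₁^3 + (-667467381815199/200795254400000000000) * t₁ * t₂^2 * s₁^4 + (-19610633375329396676409/1133096313476562500000000000) * t₂^3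 * s₁^4 + (906624101370003456937/31517028808593750000000000) * t₁^2 * s₁^5 + (17667137681193460073758801780963/3226278730517578125000000000000000000) * t₁ * t₂ * s₁^5 + (4364285403343614804602239/172343949279785156250000000000000) * t₂^2 * s₁^5 + (-4355006261764986034238176003636393/123405161442297363281250000000000000000) * t₁ * s₁^6 + (2686257067883953003879621489223/241970904788818359375000000000000000) * t₂ * s₁^6 + (104081092317251475177384751784603/296172387461513671875000000000000000000) * s₁^7 + (94342519411/19307236000000000000) * t₁ * t₂^3 * s₁^2 + (-329374783571449/501988136000000000000) * t₁ * t₂^2 * s₁^3 + (133381892497556413723061/88381512451171875000000000000) * t₂^3 * s₁^3 + (-23118517974768370889/17509460449218750000000000) * t₁^2 * s₁^4 + (324193682821315163092425257089/1792377072509765625000000000000000000) * t₁ * t₂ * s₁^4 + (-83884150251632710215092801/344687898559570312500000000000000) * t₂^2 * s₁^4 + (535529325462816923452623850979783/205675269070495605468750000000000000000) * t₁ * s₁^5 + (98954891901483470734001109913/268856560876464843750000000000000000) * t₂ * s₁^5 + (-947222807543944869454009433351509/493620645769189453125000000000000000000) * s₁^6 + (-2683799554471/1003976272000000000000) * t₁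 * t₂^2 * s₁^2 + (-99678191317855339/5836486816406250000000000) * t₁^2 * s₁^3 + (-19963381666449217466093010961/597459024169921875000000000000000000) * t₁ * t₂ * s₁^3 + (3186200914964573446252711/114895966186523437500000000000000) * t₂^2 * s₁^3 + (2424384025652256966969310071859/22852807674499511718750000000000000000) * t₁ * s₁^4 + (-556339099979736607120618703/22404713406372070312500000000000000) * t₂ * s₁^4 + (-5501891956226248149558902848217/54846738418798828125000000000000000000) * s₁^5 + (4519098811199/38146972656250000000000) * t₁^2 * s₁^2 + (-32564772200503370009090349/199153008056640625000000000000000000) * t₁ * t₂ * s₁^2 + (2728622598966394653254648567/7617602558166503906250000000000000000) * t₁ * s₁^3 + (6983906523651941199371139/9957650402832031250000000000000000) * t₂ * s₁^3 + (-38070864603056552187421239781/18282246139599609375000000000000000000) * s₁^4 + (-4519098811199/1907348632812500000000000) * t₁ * s₁^2 + (4519098811199/572204589843750000000000) * s₁^3) * E2 + ((17576/29296875) * t₂^12 * s₁^4 + (-580307/732421875) * t₂^11 * s₁^5 + (60788189/126953125000) * t₂^10 * s₁^6 + (6614722313/33007812500000) * t₂^9 * s₁^7 + (2923797165971/8582031250000000)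 * t₂^8 * s₁^8 + (1311917015138557/2231328125000000000) * t₂^7 * s₁^9 + (1707698206483848457/1740435937500000000000) * t₂^6 * s₁^10 + (759167404931288096119/452513343750000000000000) * t₂^5 * s₁^11 + (111850664216770961135491/39217823125000000000000000) * t₂^4 * s₁^12 + (-70497431804839735717912323/10196634012500000000000000000) * t₂^3 * s₁^13 + (-6541833010224481536900987/20393268025000000000000000000) * t₁ * t₂ * s₁^14 + (6285290539235286182512713/20393268025000000000000000000) * t₂^2 * s₁^14 + (-35152/29296875) * t₂^12 * s₁^3 + (-1440413/732421875) * t₂^11 * s₁^4 + (2658448166/714111328125) * t₂^10 * s₁^5 + (-4823745588523/1485351562500000) * t₂^9 * s₁^6 + (-365367462684437/193095703125000000) * t₂^8 * s₁^7 + (-328820244589190869/100409765625000000000) * t₂^7 * s₁^8 + (-7174377829980689903/1305326953125000000000) * t₂^6 * s₁^9 + (-63570994414258156438099/6787700156250000000000000) * t₂^5 * s₁^10 + (-1084834623233707831225651/67877001562500000000000000) * t₂^4 * s₁^11 + (4845175396909644395089970789/152949510187500000000000000000) * t₂^3 * s₁^12 + (1757327845596934413024019/796612032226562500000000000) * t₁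 * t₂ * s₁^13 + (183753744511435532209150807/38237377546875000000000000000) * t₂^2 * s₁^13 + (128271235494597677194137/10196634012500000000000000000) * t₁ * s₁^14 + (17576/29296875) * t₂^12 * s₁^2 + (4621747/732421875) * t₂^11 * s₁^3 + (-474528073/2856445312500) * t₂^10 * s₁^4 + (-6879390922147/1237792968750000) * t₂^9 * s₁^5 + (56722843134962999/5792871093750000000) * t₂^8 * s₁^6 + (3962064515590565437/502048828125000000000) * t₂^7 * s₁^7 + (261725723808684538829/19579904296875000000000) * t₂^6 * s₁^8 + (57719822929290923090477/2545387558593750000000000) * t₂^5 * s₁^9 + (342778661112108124346975671/8824010203125000000000000000) * t₂^4 * s₁^10 + (-404806492665271945964688541067/6882727958437500000000000000000) * t₂^3 * s₁^11 + (-9928693422179/73242187500000000) * t₁^2 * s₁^12 + (-1696944983192004692872991191/254915850312500000000000000000) * t₁ * t₂ * s₁^12 + (-64363163997686331906701839987/2294242652812500000000000000000) * t₂^2 * s₁^12 + (35256153692171638686013141/764747550937500000000000000000) * t₁ * s₁^13 + (-175677085653657/1220703125000000000) * t₂ * s₁^13 + (-867009/244140625) * t₂^11 * s₁^2 + (-9105814714/714111328125)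 * t₂^10 * s₁^3 + (10822496994589/1237792968750000) * t₂^9 * s₁^4 + (-3470808670850969/7241088867187500000) * t₂^8 * s₁^5 + (-132153710573905730143/7530732421875000000000) * t₂^7 * s₁^6 + (-5416532199131103545113/293698564453125000000000) * t₂^6 * s₁^7 + (-594843778393793570282491/19090406689453125000000000) * t₂^5 * s₁^8 + (-177094863202854427339293971/3309003826171875000000000000) * t₂^4 * s₁^9 + (5647783313422608729734495270189/103240919376562500000000000000000) * t₂^3 * s₁^10 + (18887732399059531/28015136718750000000) * t₁^2 * s₁^11 + (24855870002849472922185692879/2150852487011718750000000000000) * t₁ * t₂ * s₁^11 + (26965377507719611708158507378077/438773907350390625000000000000000) * t₂^2 * s₁^11 + (-4588597310081315205823776073/11471213264062500000000000000000) * t₁ * s₁^12 + (4372305984396217/6103515625000000000) * t₂ * s₁^12 + (221300089/25390625000) * t₂^10 * s₁^2 + (82992421831913/7426757812500000) * t₂^9 * s₁^3 + (-32137357966089041/2228027343750000000) * t₂^8 * s₁^4 + (414963533539616593669/37653662109375000000000) * t₂^7 * s₁^5 + (60722945758754600499029/2936985644531250000000000) * t₂^6 * s₁^6 + (1565058404154298100820269/58739712890625000000000000)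 * t₂^5 * s₁^7 + (27231413719989892672276159613/595620688710937500000000000000) * t₂^4 * s₁^8 + (-32287773866695339511311157396009/1393752411583593750000000000000000) * t₂^3 * s₁^9 + (-32203824611427479059/22692260742187500000000) * t₁^2 * s₁^10 + (-117929261016872701514141276182349/9291682743890625000000000000000000) * t₁ * t₂ * s₁^10 + (-11322679312436838957006523379210017/157958606646140625000000000000000000) * t₂^2 * s₁^10 + (8274944445941757231001579551293/8775478147007812500000000000000000) * t₁ * s₁^11 + (-21153180963309193001/14007568359375000000000) * t₂ * s₁^11 + (-44811009517/3960937500000) * t₂^9 * s₁^2 + (-7069524521386381/4827392578125000000) * t₂^8 * s₁^3 + (334852188532186726207/37653662109375000000000) * t₂^7 * s₁^4 + (-514304476226377294712477/36712320556640625000000000) * t₂^6 * s₁^5 + (-313355103366275867938296223/19090406689453125000000000000) * t₂^5 * s₁^6 + (-184479730142021571585684805559/7445258608886718750000000000000) * t₂^4 * s₁^7 + (-31295146872067626383629763099879/34843810289589843750000000000000000) * t₂^3 * s₁^8 + (69684669127876140961/42547988891601562500000) * t₁^2 * s₁^9 + (19830731937863633696527363566289/2177738143099365234375000000000000) * t₁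 * t₂ * s₁^9 + (172779894390469097940041531556341/3554068649538164062500000000000000) * t₂^2 * s₁^9 + (-221578888290591529038883204588639/197448258307675781250000000000000000) * t₁ * s₁^10 + (9916478252689702570009/5673065185546875000000000) * t₂ * s₁^10 + (558006811647/68656250000000) * t₂^8 * s₁^2 + (-57473202213044419937/12551220703125000000000) * t₂^7 * s₁^3 + (-2379075543915825869369/4079146728515625000000000) * t₂^6 * s₁^4 + (32085207558769382916795599/3977168060302734375000000000) * t₂^5 * s₁^5 + (639481608821936086094290974457/74452586088867187500000000000000) * t₂^4 * s₁^6 + (68514330899694963003898593375953/13401465495996093750000000000000000) * t₂^3 * s₁^7 + (-37949318061773541913/34038391113281250000000) * t₁^2 * s₁^8 + (-736606570183653052564410839029627/174219051447949218750000000000000000) * t₁ * t₂ * s₁^8 + (-168372314388582518534231612037359197/8885171623845410156250000000000000000) * t₂^2 * s₁^8 + (1344922599875003965682155150698767/1777034324769082031250000000000000000) * t₁ * s₁^9 + (-10196343919140181939241/8509597778320312500000000) * t₂ * s₁^9 + (-10677419533459/3570125000000000) * t₂^7 * s₁^2 + (12754366119380475137597/4079146728515625000000000) * t₂^6 * s₁^3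 + (-12403634384394218910823711/7954336120605468750000000000) * t₂^5 * s₁^4 + (-22348291079592769271481872287/10340636956787109375000000000000) * t₂^4 * s₁^5 + (-560588030745562099191704466689491/290365085746582031250000000000000000) * t₂^3 * s₁^6 + (938297689722112898843/2127399444580078125000000) * t₁^2 * s₁^7 + (32556788873744092561960899281711/27221726788742065429687500000000000) * t₁ * t₂ * s₁^7 + (40875564435679769552059931995864189/11106464529806762695312500000000000000) * t₂^2 * s₁^7 + (-974021573433042276975941461598413/3417373701479003906250000000000000000) * t₁ * s₁^8 + (102728597199433834963789/212739944458007812500000000) * t₂ * s₁^8 + (8482330085789/22277580000000000) * t₂^6 * s₁^2 + (-975732500074339743821099/1631658691406250000000000000) * t₂^5 * s₁^3 + (37456016236974591213653173177/82725095654296875000000000000000) * t₂^4 * s₁^4 + (211809274137319857623081265546451/967883619155273437500000000000000000) * t₂^3 * s₁^5 + (-624569740003964532407/7091331481933593750000000) * t₁^2 * s₁^6 + (-999401954281248502207276170905837/5807301714931640625000000000000000000) * t₁ * t₂ * s₁^6 + (-41765918124850148810396354680251299/296172387461513671875000000000000000000) * t₂^2 * s₁^6 + (10980184390067697534803539721158309/222129290596135253906250000000000000000)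 * t₁ * s₁^7 + (-109150373644668041465899/1063699722290039062500000000) * t₂ * s₁^7 + (302432370347093/9653618000000000000) * t₂^5 * s₁^2 + (-255516288733985857135453231/13787515942382812500000000000000) * t₂^4 * s₁^3 + (1033585529916057611131903283453/107542624350585937500000000000000000) * t₂^3 * s₁^4 + (10897934298059345257/2954721450805664062500000) * t₁^2 * s₁^5 + (640532456014576569675969758209/151231815493011474609375000000000000) * t₁ * t₂ * s₁^5 + (-2315033009766859543515533497878007/61702580721148681640625000000000000000) * t₂^2 * s₁^5 + (104081092317251475177384751784603/740430968653784179687500000000000000000) * t₁ * s₁^6 + (12494950890948211629881/1772832870483398437500000000) * t₂ * s₁^6 + (-53954873474817/501988136000000000000) * t₂^4 * s₁^2 + (-2270133408348200732201537589/3983060161132812500000000000000000) * t₂^3 * s₁^3 + (12099444798427793219/13132095336914062500000000) * t₁^2 * s₁^4 + (2929981011680418483208799338387/2688565608764648437500000000000000000) * t₁ * t₂ * s₁^4 + (-12070939305395130350601139687399/10547449695922851562500000000000000000) * t₂^2 * s₁^4 + (-947222807543944869454009433351509/1234051614422973632812500000000000000000) * t₁ * s₁^5 + (3417340099185808467259/5909442901611328125000000000)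 * t₂ * s₁^5 + (21917374065700208387996599/11949180483398437500000000000000000) * t₂^3 * s₁^2 + (79224535678749167/2188682556152343750000000) * t₁^2 * s₁^3 + (614788409105613167121703027/56011783515930175781250000000000000) * t₁ * t₂ * s₁^3 + (-196993601826846282495983111033/11426403837249755859375000000000000000) * t₂^2 * s₁^3 + (-5501891956226248149558902848217/137116846046997070312500000000000000000) * t₁ * s₁^4 + (5488000892623446617/656604766845703125000000000) * t₂ * s₁^4 + (-4519098811199/28610229492187500000000) * t₁^2 * s₁^2 + (48607844568120202893862957/199153008056640625000000000000000000) * t₁ * t₂ * s₁^2 + (-82581409581897025473381421/597459024169921875000000000000000000) * t₂^2 * s₁^2 + (-38070864603056552187421239781/45705615348999023437500000000000000000) * t₁ * s₁^3 + (193711599381284131/218868255615234375000000000) * t₂ * s₁^3 + (4519098811199/1430511474609375000000000) * t₁ * s₁^2 + (-4519098811199/1430511474609375000000000) * t₂ * s₁^2) * E3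
  have := pow_eq_zero_iff (n := 2) (by norm_num) |>.mp key
  simp only [mul_eq_zero] at this
  rcases this with ((((((((h|h)|h)|h)|h)|h)|h)|h)|h) <;>
    first
      | exact h10 h | exact h20 h | exact hs0 h
      | exact d11 h | exact d22 h | exact dss h
      | exact d12 h | exact d1s h | exact d2s h
end

section
/- The 3-dimensional space V spanned by the polynomials (2x-1)^2, (x-1)^4, x^4 has the following property: at each of the points 0 and 1, the set of possible orders of vanishing of nonzero elements of V is exactly {0, 2, 4}. That is, every nonzero f in V vanishes at 0 to order 0, 2, or 4, each of these orders is attained, and the same holds at the point 1. -/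
open Polynomial

private lemma auxMult {f : ℂ[X]} {t : ℂ} (hf : f ≠ 0) (hdeg : f.natDegree ≤ 4)
    (h1 : eval t f = 0 → eval t (derivative f) = 0)
    (h3 : eval t f = 0 → eval t (derivative^[2] f) = 0 → eval t (derivative^[3] f) = 0) :
    rootMultiplicity t f ∈ ({0, 2, 4} : Set ℕ) := by
  have hle : rootMultiplicity t f ≤ 4 := by
    have hd := Polynomial.pow_rootMultiplicity_dvd f t
    have := Polynomial.natDegree_le_of_dvd hd hf
    simpa using this.trans hdeg
  have key : ∀ n : ℕ, (n < rootMultiplicity t f ↔ ∀ m ≤ n, (derivative^[m] f).IsRoot t) :=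
    fun n => lt_rootMultiplicity_iff_isRoot_iterate_derivative hf
  have h12 : 0 < rootMultiplicity t f → 1 < rootMultiplicity t f := by
    intro h
    have h0 : (derivative^[0] f).IsRoot t := ((key 0).1 h) 0 le_rfl
    refine (key 1).2 fun m hm => ?_
    interval_cases m
    · exact h0
    · simpa [IsRoot] using h1 (by simpa [IsRoot] using h0)
  have h34 : 2 < rootMultiplicity t f → 3 < rootMultiplicity t f := by
    intro h
    have hr := (key 2).1 h
    refine (key 3).2 fun m hm => ?_
    rcases Nat.lt_or_ge m 3 with hm3 | hm3
    · exact hr m (by omega)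
    · have : m = 3 := by omega
      subst this
      exact h3 (by simpa [IsRoot] using hr 0 (by omega)) (by simpa [IsRoot] using hr 2 le_rfl)
  simp only [Set.mem_insert_iff, Set.mem_singleton_iff]
  omega

theorem stmt9 :
    let V : Submodule ℂ (Polynomial ℂ) :=
      Submodule.span ℂ ({(2 * X - 1) ^ 2, (X - 1) ^ 4, X ^ 4} : Set (Polynomial ℂ))
    (∀ f ∈ V, f ≠ 0 →
        rootMultiplicity (0 : ℂ) f ∈ ({0, 2, 4} : Set ℕ) ∧
        rootMultiplicity (1 : ℂ) f ∈ ({0, 2, 4} : Set ℕ)) ∧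
    (∀ n ∈ ({0, 2, 4} : Set ℕ),
        (∃ f ∈ V, f ≠ 0 ∧ rootMultiplicity (0 : ℂ) f = n) ∧
        (∃ f ∈ V, f ≠ 0 ∧ rootMultiplicity (1 : ℂ) f = n)) := by
  intro V
  have hp : ((2 * X - 1) ^ 2 : ℂ[X]) ∈ V :=
    Submodule.subset_span (by simp)
  have hq : ((X - 1) ^ 4 : ℂ[X]) ∈ V :=
    Submodule.subset_span (by simp)
  have hr : ((X : ℂ[X]) ^ 4) ∈ V :=
    Submodule.subset_span (by simp)
  constructor
  · intro f hfV hf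
    have hdec : ∃ a b c : ℂ, f = C a * (2*X-1)^2 + C b * (X-1)^4 + C c * X^4 := by
      rw [show V = _ from rfl, Submodule.mem_span_insert] at hfV
      obtain ⟨a, z, hz, rfl⟩ := hfV
      rw [Submodule.mem_span_insert] at hz
      obtain ⟨b, w, hw, rfl⟩ := hz
      rw [Submodule.mem_span_singleton] at hw
      obtain ⟨c, rfl⟩ := hw
      exact ⟨a, b, c, by simp only [smul_eq_C_mul]; ring⟩
    obtain ⟨a, b, c, rfl⟩ := hdec
    set f : ℂ[X] := C a * (2*X-1)^2 + C b * (X-1)^4 + C c * X^4 with hfdef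
    have hdeg : f.natDegree ≤ 4 := by rw [hfdef]; compute_degree
    have e00 : eval 0 f = a + b := by simp [hfdef]; ring
    have e01 : eval 0 (derivative f) = -4*a - 4*b := by
      simp [hfdef, derivative_pow]; ring
    have e02 : eval 0 (derivative^[2] f) = 8*a + 12*b := by
      simp [hfdef, Function.iterate_succ_apply', derivative_pow]; ring
    have e03 : eval 0 (derivative^[3] f) = -24*b := by
      simp [hfdef, Function.iterate_succ_apply', derivative_pow]; ring
    have e10 : eval 1 f = a + c := by simp [hfdef]; ring
    have e11 : eval 1 (derivative f) = 4*a + 4*c := by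
      simp [hfdef, derivative_pow]; ring
    have e12 : eval 1 (derivative^[2] f) = 8*a + 12*c := by
      simp [hfdef, Function.iterate_succ_apply', derivative_pow]; ring
    have e13 : eval 1 (derivative^[3] f) = 24*c := by
      simp [hfdef, Function.iterate_succ_apply', derivative_pow]; ring
    constructor
    · refine auxMult hf hdeg ?_ ?_
      · rw [e00, e01]; intro h; linear_combination (-4 : ℂ) * h
      · rw [e00, e02, e03]; intro h1 h2; linear_combination (48 : ℂ)*h1 - 6*h2
    · refine auxMult hf hdeg ?_ ?_
      · rw [e10, e11]; intro h; linear_combination (4 : ℂ) * h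
      · rw [e10, e12, e13]; intro h1 h2; linear_combination (-48 : ℂ)*h1 + 6*h2
  · intro n hn
    simp only [Set.mem_insert_iff, Set.mem_singleton_iff] at hn
    rcases hn with rfl | rfl | rfl
    · -- n = 0, witness (2X-1)^2
      refine ⟨⟨_, hp, ?_, ?_⟩, ⟨_, hp, ?_, ?_⟩⟩
      · intro h; have := congrArg (eval 0) h; simp at this
      · exact rootMultiplicity_eq_zero (by norm_num [IsRoot])
      · intro h; have := congrArg (eval 0) h; simp at this
      · exact rootMultiplicity_eq_zero (by norm_num [IsRoot])
    · -- n = 2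
      constructor
      · refine ⟨(2*X-1)^2 - (X-1)^4, sub_mem hp hq, ?_, ?_⟩
        · intro h; have := congrArg (eval 2) h; norm_num at this
        · have hne : ((2*X-1)^2 - (X-1)^4 : ℂ[X]) ≠ 0 := by
            intro h; have := congrArg (eval 2) h; norm_num at this
          have hge : 1 < rootMultiplicity (0:ℂ) ((2*X-1)^2 - (X-1)^4) := by
            rw [lt_rootMultiplicity_iff_isRoot_iterate_derivative hne]
            intro m hm; interval_cases m
            · norm_num [IsRoot]
            · norm_num [IsRoot, derivative_pow]
          have hlt : rootMultiplicity (0:ℂ) ((2*X-1)^2 - (X-1)^4) ≤ 2 := by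
            by_contra hc
            push_neg at hc
            have := (lt_rootMultiplicity_iff_isRoot_iterate_derivative hne).1 hc 2 le_rfl
            simp [IsRoot, Function.iterate_succ_apply', derivative_pow] at this
            norm_num at this
          omega
      · refine ⟨(2*X-1)^2 - X^4, sub_mem hp hr, ?_, ?_⟩
        · intro h; have := congrArg (eval 0) h; norm_num at this
        · have hne : ((2*X-1)^2 - X^4 : ℂ[X]) ≠ 0 := by
            intro h; have := congrArg (eval 0) h; norm_num at this
          have hge : 1 < rootMultiplicity (1:ℂ) ((2*X-1)^2 - X^4) := by
            rw [lt_rootMultiplicity_iff_isRoot_iterate_derivative hne]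
            intro m hm; interval_cases m
            · norm_num [IsRoot]
            · norm_num [IsRoot, derivative_pow]
          have hlt : rootMultiplicity (1:ℂ) ((2*X-1)^2 - X^4) ≤ 2 := by
            by_contra hc
            push_neg at hc
            have := (lt_rootMultiplicity_iff_isRoot_iterate_derivative hne).1 hc 2 le_rfl
            simp [IsRoot, Function.iterate_succ_apply', derivative_pow] at this
            norm_num at this
          omega
    · -- n = 4
      constructor
      · refine ⟨X^4, hr, ?_, ?_⟩
        · exact pow_ne_zero _ X_ne_zero
        · have : (X^4 : ℂ[X]) = (X - C 0)^4 := by simp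
          rw [this, rootMultiplicity_X_sub_C_pow]
      · refine ⟨(X-1)^4, hq, ?_, ?_⟩
        · intro h; have := congrArg (eval 0) h; norm_num at this
        · have : ((X-1)^4 : ℂ[X]) = (X - C 1)^4 := by simp
          rw [this, rootMultiplicity_X_sub_C_pow]
end

section
/- Fix nonnegative integers k, l_1, ..., l_r with k ≥ l_1 ≥ ... ≥ l_r ≥ 0 (set l_0 = k, l_{r+1} = 0) and complex numbers m_1,...,m_r. Define operators D̃_i = D̃_i(m,l,k) = x^{∑_{j=1}^i m_j + i} ∘ (d/dx)^{l_i - l_{i+1}} ∘ x^{l_i - l_{i+1} - ∑_{j=1}^i m_j - i} for i = 0,...,r. Then D̃_i(m,l,k) D̃_j(m',l',k') = D̃_j(m',l',k') D̃_i(m,l,k) for all i, j and all values of the parameters (m,l,k) and (m',l',k'). -/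
/-- The operator `x^a ∘ (d/dx)^n ∘ x^{n-a}` acting on complex-valued functions of a
real variable, of the form of the operators `D̃_i` (where `a = ∑_{j≤i} m_j + i` and
`n = l_i - l_{i+1}`). -/
noncomputable def tildeD (a : ℂ) (n : ℕ) (f : ℝ → ℂ) : ℝ → ℂ :=
  fun x => (x : ℂ) ^ a * iteratedDeriv n (fun y : ℝ => (y : ℂ) ^ ((n : ℂ) - a) * f y) x

open scoped ContDiff
open Set Complex



local notation "S" => Set.Ioi (0:ℝ)

/-- The Euler-type operator `θ + c = x d/dx + c`. -/
noncomputable def Eop (c : ℂ) (f : ℝ → ℂ) : ℝ → ℂ :=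
  fun x => (x : ℂ) * deriv f x + c * f x

/-- Iterated composition `(θ+1-a)(θ+2-a)⋯(θ+n-a)`. -/
noncomputable def Gop (a : ℂ) : ℕ → (ℝ → ℂ) → ℝ → ℂ
  | 0, f => f
  | n+1, f => Gop a n (Eop ((n : ℂ) + 1 - a) f)

lemma smooth_deriv {f : ℝ → ℂ} (hf : ContDiffOn ℝ ∞ f S) :
    ContDiffOn ℝ ∞ (deriv f) S := by
  exact hf.deriv_of_isOpen isOpen_Ioi (by simp)

lemma Eop_smooth {f : ℝ → ℂ} (c : ℂ) (hf : ContDiffOn ℝ ∞ f S) :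
    ContDiffOn ℝ ∞ (Eop c f) S := by
  unfold Eop
  exact ((Complex.ofRealCLM.contDiff.contDiffOn).mul (smooth_deriv hf)).add
    (contDiffOn_const.mul hf)

lemma diffAt_of_smooth {f : ℝ → ℂ} (hf : ContDiffOn ℝ ∞ f S) {x : ℝ} (hx : x ∈ S) :
    DifferentiableAt ℝ f x :=
  ((hf.differentiableOn (by simp)).differentiableAt (isOpen_Ioi.mem_nhds hx))

lemma deriv_Eop {f : ℝ → ℂ} (c : ℂ) (hf : ContDiffOn ℝ ∞ f S) {x : ℝ} (hx : x ∈ S) :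
    deriv (Eop c f) x = (1 + c) * deriv f x + (x : ℂ) * deriv (deriv f) x := by
  have h1 : HasDerivAt (fun y : ℝ => (y : ℂ)) 1 x := by
    exact Complex.ofRealCLM.hasDerivAt (x := x)
  have h2 : HasDerivAt (deriv f) (deriv (deriv f) x) x :=
    (diffAt_of_smooth (smooth_deriv hf) hx).hasDerivAt
  have h3 : HasDerivAt f (deriv f x) x := (diffAt_of_smooth hf hx).hasDerivAt
  have := ((h1.mul h2).add (h3.const_mul c)).deriv
  rw [show ((fun y : ℝ => (y:ℂ)) * deriv f + fun y => c * f y) = Eop c f from rfl] at this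
  rw [this]; ring

lemma Eop_comm {f : ℝ → ℂ} (c c' : ℂ) (hf : ContDiffOn ℝ ∞ f S) {x : ℝ} (hx : x ∈ S) :
    Eop c (Eop c' f) x = Eop c' (Eop c f) x := by
  simp only [Eop] at *
  rw [deriv_Eop c' hf hx, deriv_Eop c hf hx]
  ring

lemma Eop_congr {g h : ℝ → ℂ} (c : ℂ) (hgh : Set.EqOn g h S) :
    Set.EqOn (Eop c g) (Eop c h) S := by
  intro x hx
  have hev : g =ᶠ[nhds x] h := Filter.eventuallyEq_of_mem (isOpen_Ioi.mem_nhds hx) hgh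
  simp only [Eop, hev.deriv_eq, hgh hx]

lemma Gop_congr (a : ℂ) (n : ℕ) {g h : ℝ → ℂ} (hgh : Set.EqOn g h S) :
    Set.EqOn (Gop a n g) (Gop a n h) S := by
  induction n generalizing g h with
  | zero => exact hgh
  | succ n ih => exact ih (Eop_congr _ hgh)

lemma Gop_smooth {f : ℝ → ℂ} (a : ℂ) (n : ℕ) (hf : ContDiffOn ℝ ∞ f S) :
    ContDiffOn ℝ ∞ (Gop a n f) S := by
  induction n generalizing f with
  | zero => exact hf
  | succ n ih => exact ih (Eop_smooth _ hf)

lemma Gop_swap {f : ℝ → ℂ} (a c : ℂ) (n : ℕ) (hf : ContDiffOn ℝ ∞ f S) :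
    Set.EqOn (Gop a n (Eop c f)) (Eop c (Gop a n f)) S := by
  induction n generalizing f with
  | zero => exact fun x _ => rfl
  | succ n ih =>
    intro x hx
    calc Gop a (n+1) (Eop c f) x
        = Gop a n (Eop ((n:ℂ)+1-a) (Eop c f)) x := rfl
      _ = Gop a n (Eop c (Eop ((n:ℂ)+1-a) f)) x :=
          Gop_congr a n (fun y hy => Eop_comm _ _ hf hy) hx
      _ = Eop c (Gop a n (Eop ((n:ℂ)+1-a) f)) x := ih (Eop_smooth _ hf) hx

lemma Gop_comm {f : ℝ → ℂ} (a₁ a₂ : ℂ) (n₁ n₂ : ℕ) (hf : ContDiffOn ℝ ∞ f S) :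
    Set.EqOn (Gop a₁ n₁ (Gop a₂ n₂ f)) (Gop a₂ n₂ (Gop a₁ n₁ f)) S := by
  induction n₁ generalizing f with
  | zero => exact fun x _ => rfl
  | succ n ih =>
    intro x hx
    calc Gop a₁ (n+1) (Gop a₂ n₂ f) x
        = Gop a₁ n (Eop ((n:ℂ)+1-a₁) (Gop a₂ n₂ f)) x := rfl
      _ = Gop a₁ n (Gop a₂ n₂ (Eop ((n:ℂ)+1-a₁) f)) x :=
          Gop_congr a₁ n (fun y hy => (Gop_swap a₂ _ n₂ hf hy).symm) hx
      _ = Gop a₂ n₂ (Gop a₁ n (Eop ((n:ℂ)+1-a₁) f)) x := ih (Eop_smooth _ hf) hx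
      _ = Gop a₂ n₂ (Gop a₁ (n+1) f) x := rfl

lemma tildeD_congr (a : ℂ) (n : ℕ) {g h : ℝ → ℂ} (hgh : Set.EqOn g h S) {x : ℝ}
    (hx : x ∈ S) : tildeD a n g x = tildeD a n h x := by
  have hev : (fun y : ℝ => (y:ℂ) ^ ((n:ℂ) - a) * g y)
      =ᶠ[nhds x] (fun y : ℝ => (y:ℂ) ^ ((n:ℂ) - a) * h y) :=
    Filter.eventuallyEq_of_mem (isOpen_Ioi.mem_nhds hx)
      (fun y hy => by rw [hgh hy])
  unfold tildeD
  rw [hev.iteratedDeriv_eq n]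

lemma tildeD_succ {f : ℝ → ℂ} (a : ℂ) (n : ℕ) (hf : ContDiffOn ℝ ∞ f S) {x : ℝ}
    (hx : x ∈ S) : tildeD a (n+1) f x = tildeD a n (Eop ((n:ℂ)+1-a) f) x := by
  unfold tildeD
  rw [iteratedDeriv_succ']
  congr 1
  have hev : deriv (fun y : ℝ => (y:ℂ) ^ ((↑(n+1):ℂ) - a) * f y)
      =ᶠ[nhds x] (fun y : ℝ => (y:ℂ) ^ ((n:ℂ) - a) * Eop ((n:ℂ)+1-a) f y) := by
    filter_upwards [isOpen_Ioi.mem_nhds hx] with y hy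
    have hy0 : (0:ℝ) < y := hy
    have hyC : (y:ℂ) ≠ 0 := by exact_mod_cast hy0.ne'
    have h1 : HasDerivAt (fun z : ℝ => (z : ℂ)) 1 y := by
      exact Complex.ofRealCLM.hasDerivAt (x := y)
    have hpow : HasDerivAt (fun z : ℝ => (z:ℂ) ^ ((↑(n+1):ℂ) - a))
        (((↑(n+1):ℂ) - a) * (y:ℂ) ^ ((↑(n+1):ℂ) - a - 1)) y :=
      (Complex.hasStrictDerivAt_cpow_const
        (Complex.ofReal_mem_slitPlane.2 hy0)).hasDerivAt.comp_ofReal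
    have h3 : HasDerivAt f (deriv f y) y := (diffAt_of_smooth hf hy).hasDerivAt
    rw [show (fun y : ℝ => (y:ℂ) ^ ((↑(n+1):ℂ) - a) * f y)
        = (fun z : ℝ => (z:ℂ) ^ ((↑(n+1):ℂ) - a)) * f from rfl, (hpow.mul h3).deriv]
    have e1 : (↑(n+1):ℂ) - a - 1 = (n:ℂ) - a := by push_cast; ring
    have e2 : (y:ℂ) ^ ((↑(n+1):ℂ) - a) = (y:ℂ) ^ ((n:ℂ) - a) * (y:ℂ) := by
      rw [show (↑(n+1):ℂ) - a = ((n:ℂ) - a) + 1 by push_cast; ring,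
        Complex.cpow_add _ _ hyC, Complex.cpow_one]
    rw [e1, e2]
    simp only [Eop]
    push_cast
    ring
  exact hev.iteratedDeriv_eq n

lemma tildeD_eq_Gop {f : ℝ → ℂ} (a : ℂ) (n : ℕ) (hf : ContDiffOn ℝ ∞ f S) :
    Set.EqOn (tildeD a n f) (Gop a n f) S := by
  induction n generalizing f with
  | zero =>
    intro x hx
    have hx0 : (x:ℂ) ≠ 0 := by exact_mod_cast (ne_of_gt (show (0:ℝ) < x from hx))
    simp only [tildeD, Gop, iteratedDeriv_zero, Nat.cast_zero, zero_sub]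
    rw [← mul_assoc, ← Complex.cpow_add _ _ hx0]
    simp
  | succ n ih =>
    intro x hx
    rw [tildeD_succ a n hf hx]
    exact ih (Eop_smooth _ hf) hx

/-- Any two operators of the form `x^a ∘ (d/dx)^n ∘ x^{n-a}` commute (on `x > 0`);
in particular the operators `D̃_i(m,l,k)` pairwise commute for all values of the
parameters. -/
theorem stmt12 (a₁ a₂ : ℂ) (n₁ n₂ : ℕ) (f : ℝ → ℂ)
    (hf : ContDiffOn ℝ (⊤ : ℕ∞) f (Set.Ioi 0)) (x : ℝ) (hx : 0 < x) :
    tildeD a₁ n₁ (tildeD a₂ n₂ f) x = tildeD a₂ n₂ (tildeD a₁ n₁ f) x := by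
  have hf' : ContDiffOn ℝ ∞ f S := hf.of_le (by simp)
  have hx' : x ∈ S := hx
  calc tildeD a₁ n₁ (tildeD a₂ n₂ f) x
      = tildeD a₁ n₁ (Gop a₂ n₂ f) x := tildeD_congr _ _ (tildeD_eq_Gop a₂ n₂ hf') hx'
    _ = Gop a₁ n₁ (Gop a₂ n₂ f) x := tildeD_eq_Gop _ _ (Gop_smooth a₂ n₂ hf') hx'
    _ = Gop a₂ n₂ (Gop a₁ n₁ f) x := Gop_comm _ _ _ _ hf' hx'
    _ = tildeD a₂ n₂ (Gop a₁ n₁ f) x := (tildeD_eq_Gop _ _ (Gop_smooth a₁ n₁ hf') hx').symm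
    _ = tildeD a₂ n₂ (tildeD a₁ n₁ f) x := (tildeD_congr _ _ (tildeD_eq_Gop a₁ n₁ hf') hx').symm
end

section
/- For all indices i, j in {0,1,...,r}, the operators D_i(l,k) = x(x-1)d/dx - e_i(l,k)(x-1) - (k+1) satisfy the holonomy relation D_j(l + 1_i, k+1) ∘ D_i(l,k) = D_i(l + 1_j, k+1) ∘ D_j(l,k), where e_i(l,k) = k + ∑_{s=1}^i m_s - l_i + l_{i+1} + i, 1_i denotes the vector (1,...,1,0,...,0) with i ones, and l + 1_i shifts l accordingly (with l_0 = k, l_{r+1} = 0). -/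
open Polynomial

/-- The exponents `e_i(l,k) = k + ∑_{s=1}^i m_s - l_i + l_{i+1} + i`, where `k = l 0`
and `l (r+1) = 0` by convention. -/
noncomputable def eExp' (m l : ℕ → ℂ) (i : ℕ) : ℂ :=
  l 0 + (∑ s ∈ Finset.Icc 1 i, m s) - l i + l (i + 1) + i

/-- The operator `D_i(l,k) = x(x-1) d/dx - e_i(l,k)(x-1) - (k+1)` (with `k = l 0`) as a
linear map on polynomials. -/
noncomputable def Dop' (m l : ℕ → ℂ) (i : ℕ) : Polynomial ℂ →ₗ[ℂ] Polynomial ℂ :=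
  (LinearMap.mulLeft ℂ (X * (X - 1))).comp (derivative : Polynomial ℂ →ₗ[ℂ] Polynomial ℂ)
    - LinearMap.mulLeft ℂ (C (eExp' m l i) * (X - 1) + C (l 0 + 1))

/-- The shift `l ↦ l + 1_i` combined with `k ↦ k + 1` (recall `l 0 = k`): the
coordinates `l_0, l_1, …, l_i` each increase by `1`. -/
noncomputable def shiftL (i : ℕ) (l : ℕ → ℂ) : ℕ → ℂ :=
  fun t => if t ≤ i then l t + 1 else l t

private lemma key (c c' k : ℂ) :
    ((((LinearMap.mulLeft ℂ (X * (X - 1))).comp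
        (derivative : Polynomial ℂ →ₗ[ℂ] Polynomial ℂ))
      - LinearMap.mulLeft ℂ (C (c' + 1) * (X - 1) + C (k + 1 + 1))).comp
    ((((LinearMap.mulLeft ℂ (X * (X - 1))).comp
        (derivative : Polynomial ℂ →ₗ[ℂ] Polynomial ℂ)))
      - LinearMap.mulLeft ℂ (C c * (X - 1) + C (k + 1))))
    =
    ((((LinearMap.mulLeft ℂ (X * (X - 1))).comp
        (derivative : Polynomial ℂ →ₗ[ℂ] Polynomial ℂ))
      - LinearMap.mulLeft ℂ (C (c + 1) * (X - 1) + C (k + 1 + 1))).comp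
    ((((LinearMap.mulLeft ℂ (X * (X - 1))).comp
        (derivative : Polynomial ℂ →ₗ[ℂ] Polynomial ℂ)))
      - LinearMap.mulLeft ℂ (C c' * (X - 1) + C (k + 1)))) := by
  apply LinearMap.ext
  intro p
  simp only [LinearMap.comp_apply, LinearMap.sub_apply, LinearMap.mulLeft_apply,
    map_sub, map_add, map_mul, derivative_mul, derivative_X, derivative_C,
    derivative_sub, derivative_one, C_add, C_1]
  ring

private lemma main' (m l : ℕ → ℂ) {i j : ℕ} (hij : i < j) :
    (Dop' m (shiftL i l) j).comp (Dop' m l i)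
      = (Dop' m (shiftL j l) i).comp (Dop' m l j) := by
  have hc' : eExp' m (shiftL i l) j = eExp' m l j + 1 := by
    unfold eExp' shiftL
    rw [if_pos (Nat.zero_le i), if_neg (by omega), if_neg (by omega)]
    ring
  have hc : eExp' m (shiftL j l) i = eExp' m l i + 1 := by
    unfold eExp' shiftL
    rw [if_pos (Nat.zero_le j), if_pos (le_of_lt hij), if_pos (by omega)]
    ring
  have h0i : shiftL i l 0 = l 0 + 1 := by simp [shiftL]
  have h0j : shiftL j l 0 = l 0 + 1 := by simp [shiftL]
  unfold Dop'
  rw [hc', hc, h0i, h0j]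
  exact key (eExp' m l i) (eExp' m l j) (l 0)

theorem stmt15 (r : ℕ) (m l : ℕ → ℂ) (hlr : l (r + 1) = 0) (i j : Fin (r + 1)) :
    (Dop' m (shiftL i.val l) j.val).comp (Dop' m l i.val)
      = (Dop' m (shiftL j.val l) i.val).comp (Dop' m l j.val) := by
  rcases lt_trichotomy i.val j.val with h | h | h
  · exact main' m l h
  · rw [h]
  · exact (main' m l h).symm
end
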